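/- arXiv:1207.2752 — 2 statements merged into one kernel-verified Lean document; each statement's English description precedes it below -/
import Mathlib

section
/- Let n ≥ 3, t ≥ 1, and let j : Fin t → ℤ be primitive with j s ≢ 0 (mod n) and 2·(j s) ≢ 0 (mod n) for all s. If both GI(n;j) and GI(n;[2]j) are vertex-transitive, then GI(n;[k]j) is a Cayley graph for every even integer k ≥ 2. -/
open SimpleGraph

/-- The GI-graph `GI(n; j)` on vertex set `Fin t × ZMod n`:
`(s,v)` and `(s',v')` are adjacent iff `v = v'` and `s ≠ s'` (a spoke edge), or
`s = s'` and `v' = v + j s` or `v' = v - j s` in `ZMod n` (a layer edge). -/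
def GI (n t : ℕ) (j : Fin t → ℤ) : SimpleGraph (Fin t × ZMod n) :=
  SimpleGraph.fromRel (fun x y =>
    (x.2 = y.2 ∧ x.1 ≠ y.1) ∨ (x.1 = y.1 ∧ y.2 = x.2 + (j x.1 : ZMod n)))

/-- A map on vertices respects the fundamental edge-partition of `GI(n;j)` if it maps
spoke edges to spoke edges and layer edges to layer edges. -/
def RespectsPart (n t : ℕ) (j : Fin t → ℤ) (f : Fin t × ZMod n → Fin t × ZMod n) : Prop :=
  (∀ x y : Fin t × ZMod n, (GI n t j).Adj x y → x.2 = y.2 → (f x).2 = (f y).2) ∧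
  (∀ x y : Fin t × ZMod n, (GI n t j).Adj x y → x.1 = y.1 → (f x).1 = (f y).1)

/-- The `k`-fold concatenation `[k]j` of the sequence `j`. -/
def rep (k t : ℕ) (j : Fin t → ℤ) : Fin (k * t) → ℤ :=
  fun s => j ⟨(s : ℕ) % t, Nat.mod_lt _ (by
    rcases Nat.eq_zero_or_pos t with ht | ht
    · exact absurd s.isLt (by simp [ht])
    · exact ht)⟩

/-- The sequence `j` is primitive (mod `n`): some `j s ≡ 1 (mod n)` and
`j i ≢ ±j k (mod n)` whenever `i ≠ k`. -/
def PrimitiveSeq (n : ℕ) {t : ℕ} (j : Fin t → ℤ) : Prop :=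
  (∃ s, (j s : ZMod n) = 1) ∧
  ∀ i k : Fin t, i ≠ k →
    (j i : ZMod n) ≠ (j k : ZMod n) ∧ (j i : ZMod n) ≠ -(j k : ZMod n)

/-- The set `J = {j s mod n : s}`. -/
def Jset (n : ℕ) {t : ℕ} (j : Fin t → ℤ) : Set (ZMod n) :=
  Set.range (fun s => ((j s : ZMod n)))

/-- The set `J ∪ -J`. -/
def JJset (n : ℕ) {t : ℕ} (j : Fin t → ℤ) : Set (ZMod n) :=
  Jset n j ∪ (Neg.neg '' Jset n j)

/-- A graph is vertex-transitive if its automorphism group acts transitively on vertices. -/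
def IsVertexTransitive {V : Type*} (G : SimpleGraph V) : Prop :=
  ∀ x y : V, ∃ φ : G ≃g G, φ x = y

/-- `H` is a group of automorphisms of `G` acting simply transitively (regularly)
on the vertices. -/
def IsRegularAutGroup {V : Type*} (G : SimpleGraph V) (H : Subgroup (Equiv.Perm V)) : Prop :=
  (∀ π ∈ H, ∀ x y : V, G.Adj x y ↔ G.Adj (π x) (π y)) ∧
  ∀ x y : V, ∃! π : Equiv.Perm V, π ∈ H ∧ π x = y

/-- A graph is a Cayley graph iff its automorphism group has a subgroup acting
simply transitively (regularly) on the vertices. -/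
def IsCayley {V : Type*} (G : SimpleGraph V) : Prop :=
  ∃ H : Subgroup (Equiv.Perm V), IsRegularAutGroup G H

/-- The standard rotation `ρ : (s,v) ↦ (s, v+1)` as a permutation of the vertices. -/
def rho (n t : ℕ) : Equiv.Perm (Fin t × ZMod n) :=
  Equiv.prodCongr (Equiv.refl (Fin t)) (Equiv.addRight (1 : ZMod n))

/-- The map `λ_{i,s₁,s₂}`, which swaps `(s₁,v)` and `(s₂,v)` whenever
`v ≡ i (mod gcd(n, j s₁))` (i.e. the image of `v` under the natural map
`ZMod n → ZMod (gcd (n, j s₁))` equals `i mod gcd(n, j s₁)`), and fixes all other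
vertices. -/
def lamMap (n t : ℕ) (j : Fin t → ℤ) (s₁ s₂ : Fin t) (i : ℤ) (x : Fin t × ZMod n) :
    Fin t × ZMod n :=
  if (ZMod.cast x.2 : ZMod (Int.gcd (n : ℤ) (j s₁))) =
      ((i : ℤ) : ZMod (Int.gcd (n : ℤ) (j s₁))) then
    if x.1 = s₁ then (s₂, x.2) else if x.1 = s₂ then (s₁, x.2) else x
  else x

lemma GI_adj_iff {n T : ℕ} (J : Fin T → ℤ) (hJ0 : ∀ s, (J s : ZMod n) ≠ 0)
    (x y : Fin T × ZMod n) :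
    (GI n T J).Adj x y ↔
      (x.2 = y.2 ∧ x.1 ≠ y.1) ∨
      (x.1 = y.1 ∧ (y.2 = x.2 + (J x.1 : ZMod n) ∨ x.2 = y.2 + (J x.1 : ZMod n))) := by
  unfold GI
  rw [SimpleGraph.fromRel_adj]
  constructor
  · rintro ⟨hne, (⟨h1, h2⟩ | ⟨h1, h2⟩) | (⟨h1, h2⟩ | ⟨h1, h2⟩)⟩
    · exact Or.inl ⟨h1, h2⟩
    · exact Or.inr ⟨h1, Or.inl h2⟩
    · exact Or.inl ⟨h1.symm, fun h => h2 h.symm⟩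
    · refine Or.inr ⟨h1.symm, Or.inr ?_⟩
      rw [h1] at h2
      exact h2
  · rintro (⟨h1, h2⟩ | ⟨h1, h2 | h2⟩)
    · exact ⟨fun h => h2 (congrArg Prod.fst h), Or.inl (Or.inl ⟨h1, h2⟩)⟩
    · refine ⟨fun h => ?_, Or.inl (Or.inr ⟨h1, h2⟩)⟩
      rw [h] at h2
      exact hJ0 y.1 (by linear_combination -h2)
    · refine ⟨fun h => ?_, Or.inr (Or.inr ⟨h1.symm, by rw [← h1]; exact h2⟩)⟩
      rw [h] at h2
      exact hJ0 y.1 (by linear_combination -h2)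

section Part3
variable {n T : ℕ} (J : Fin T → ℤ)

/-- Adjacent layer pairs have at most one common neighbour. -/
lemma layer_common_unique (hJ0 : ∀ s, (J s : ZMod n) ≠ 0)
    (hJ2 : ∀ s, (J s : ZMod n) + (J s : ZMod n) ≠ 0)
    {a b : Fin T × ZMod n} (hab : (GI n T J).Adj a b)
    (h1 : a.1 = b.1) {z z' : Fin T × ZMod n}
    (hz : (GI n T J).Adj a z ∧ (GI n T J).Adj b z)
    (hz' : (GI n T J).Adj a z' ∧ (GI n T J).Adj b z') : z = z' := by
  set c : ZMod n := (J a.1 : ZMod n) with hc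
  have hcb : (J b.1 : ZMod n) = c := by rw [hc, h1]
  rw [GI_adj_iff J hJ0] at hab
  rcases hab with ⟨_, hab1⟩ | ⟨_, hab2⟩
  · exact absurd h1 hab1
  have key : ∀ w : Fin T × ZMod n, (GI n T J).Adj a w → (GI n T J).Adj b w →
      (w.1 = a.1 ∧ ((b.2 = a.2 + c ∧ a.2 = w.2 + c) ∨ (a.2 = b.2 + c ∧ w.2 = a.2 + c))) := by
    intro w haw hbw
    rw [GI_adj_iff J hJ0] at haw hbw
    rcases hab2 with hab2 | hab2
    · rcases haw with ⟨e1, e2⟩ | ⟨e1, e2⟩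
      · rcases hbw with ⟨f1, f2⟩ | ⟨f1, f2⟩
        · exact absurd (by linear_combination f1 - e1 - hab2) (hJ0 a.1)
        · exact absurd (h1.trans f1) e2
      · rcases hbw with ⟨f1, f2⟩ | ⟨f1, f2⟩
        · exact absurd (h1.symm.trans e1) f2
        · rw [hcb] at f2
          refine ⟨e1.symm, Or.inl ⟨hab2, ?_⟩⟩
          rcases e2 with e2 | e2 <;> rcases f2 with f2 | f2
          · exact absurd (by linear_combination e2 - f2 - hab2) (hJ0 a.1)
          · exact absurd (by linear_combination hab2 - e2 - f2) (hJ0 a.1)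
          · exact e2
          · exact absurd (by linear_combination f2 - e2 - hab2) (hJ0 a.1)
    · rcases haw with ⟨e1, e2⟩ | ⟨e1, e2⟩
      · rcases hbw with ⟨f1, f2⟩ | ⟨f1, f2⟩
        · exact absurd (by linear_combination e1 - f1 - hab2) (hJ0 a.1)
        · exact absurd (h1.trans f1) e2
      · rcases hbw with ⟨f1, f2⟩ | ⟨f1, f2⟩
        · exact absurd (h1.symm.trans e1) f2
        · rw [hcb] at f2
          rcases e2 with e2 | e2 <;> rcases f2 with f2 | f2
          · exact absurd (by linear_combination f2 - e2 - hab2) (hJ0 a.1)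
          · exact ⟨e1.symm, Or.inr ⟨hab2, e2⟩⟩
          · exact absurd (by linear_combination hab2 - e2 - f2) (hJ0 a.1)
          · exact absurd (by linear_combination e2 - f2 - hab2) (hJ0 a.1)
  obtain ⟨w1, w2⟩ := key z hz.1 hz.2
  obtain ⟨w1', w2'⟩ := key z' hz'.1 hz'.2
  have : z.2 = z'.2 := by
    rcases w2 with ⟨u1, u2⟩ | ⟨u1, u2⟩ <;> rcases w2' with ⟨v1, v2⟩ | ⟨v1, v2⟩
    · linear_combination v2 - u2
    · exact absurd (by linear_combination -u1 - v1) (hJ2 a.1)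
    · exact absurd (by linear_combination -u1 - v1) (hJ2 a.1)
    · linear_combination u2 - v2
  exact Prod.ext (w1.trans w1'.symm) this

/-- Spoke-adjacent pairs have two distinct common neighbours (when `T ≥ 4`). -/
lemma spoke_common_pair (hJ0 : ∀ s, (J s : ZMod n) ≠ 0) (hT : 4 ≤ T)
    {a b : Fin T × ZMod n} (hab : (GI n T J).Adj a b) (h2 : a.2 = b.2) :
    ∃ z z' : Fin T × ZMod n, z ≠ z' ∧
      ((GI n T J).Adj a z ∧ (GI n T J).Adj b z) ∧
      ((GI n T J).Adj a z' ∧ (GI n T J).Adj b z') := by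
  rw [GI_adj_iff J hJ0] at hab
  rcases hab with ⟨_, hne⟩ | ⟨h1, hl⟩
  swap
  · exfalso
    rcases hl with hl | hl
    · exact hJ0 a.1 (by linear_combination -hl - h2)
    · exact hJ0 a.1 (by linear_combination h2 - hl)
  -- pick two indices different from a.1 and b.1
  have hcard : 1 < ((Finset.univ : Finset (Fin T)) \ {a.1, b.1}).card := by
    have h1 : ({a.1, b.1} : Finset (Fin T)).card ≤ 2 := by
      apply le_trans (Finset.card_insert_le _ _)
      simp
    have h2 : ((Finset.univ : Finset (Fin T)) \ {a.1, b.1}).card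
        = T - ({a.1, b.1} : Finset (Fin T)).card := by
      rw [Finset.card_sdiff_of_subset (Finset.subset_univ _)]
      simp
    omega
  obtain ⟨u, hu, v, hv, huv⟩ := Finset.one_lt_card.mp hcard
  simp only [Finset.mem_sdiff, Finset.mem_insert, Finset.mem_singleton, Finset.mem_univ,
    true_and, not_or] at hu hv
  refine ⟨(u, a.2), (v, a.2), ?_, ⟨?_, ?_⟩, ⟨?_, ?_⟩⟩
  · intro h
    exact huv (congrArg Prod.fst h)
  all_goals rw [GI_adj_iff J hJ0]
  · exact Or.inl ⟨rfl, fun h => hu.1 h.symm⟩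
  · exact Or.inl ⟨h2.symm, fun h => hu.2 h.symm⟩
  · exact Or.inl ⟨rfl, fun h => hv.1 h.symm⟩
  · exact Or.inl ⟨h2.symm, fun h => hv.2 h.symm⟩

variable {J}

/-- Automorphisms take spoke edges to spoke edges. -/
lemma spoke_pres (hJ0 : ∀ s, (J s : ZMod n) ≠ 0)
    (hJ2 : ∀ s, (J s : ZMod n) + (J s : ZMod n) ≠ 0) (hT : 4 ≤ T)
    (φ : GI n T J ≃g GI n T J) {x y : Fin T × ZMod n}
    (hxy : (GI n T J).Adj x y) (h2 : x.2 = y.2) : (φ x).2 = (φ y).2 := by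
  have hadj : (GI n T J).Adj (φ x) (φ y) := φ.map_adj_iff.mpr hxy
  rcases (GI_adj_iff J hJ0 _ _).mp hadj with ⟨e, _⟩ | ⟨e, _⟩
  · exact e
  · exfalso
    obtain ⟨z, z', hzz, hz, hz'⟩ := spoke_common_pair J hJ0 hT hxy h2
    have := layer_common_unique J hJ0 hJ2 hadj e
      (z := φ z) (z' := φ z')
      ⟨φ.map_adj_iff.mpr hz.1, φ.map_adj_iff.mpr hz.2⟩
      ⟨φ.map_adj_iff.mpr hz'.1, φ.map_adj_iff.mpr hz'.2⟩
    exact hzz (φ.injective this)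

/-- Automorphisms take layer edges to layer edges. -/
lemma layer_pres (hJ0 : ∀ s, (J s : ZMod n) ≠ 0)
    (hJ2 : ∀ s, (J s : ZMod n) + (J s : ZMod n) ≠ 0) (hT : 4 ≤ T)
    (φ : GI n T J ≃g GI n T J) {x y : Fin T × ZMod n}
    (hxy : (GI n T J).Adj x y) (h1 : x.1 = y.1) : (φ x).1 = (φ y).1 := by
  have hadj : (GI n T J).Adj (φ x) (φ y) := φ.map_adj_iff.mpr hxy
  rcases (GI_adj_iff J hJ0 _ _).mp hadj with ⟨e, _⟩ | ⟨e, _⟩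
  swap
  · exact e
  · exfalso
    have h2 : x.2 = y.2 := by
      have h := spoke_pres hJ0 hJ2 hT φ.symm hadj e
      simpa using h
    rcases (GI_adj_iff J hJ0 _ _).mp hxy with ⟨_, f⟩ | ⟨_, f⟩
    · exact f h1
    · rcases f with f | f
      · exact hJ0 x.1 (by linear_combination -f - h2)
      · exact hJ0 x.1 (by linear_combination h2 - f)

/-- Extraction of an affine multiplier from an automorphism. -/
lemma multiplier (hn : 3 ≤ n) (hJ0 : ∀ s, (J s : ZMod n) ≠ 0)
    (hJ2 : ∀ s, (J s : ZMod n) + (J s : ZMod n) ≠ 0) (hT : 4 ≤ T)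
    (φ : GI n T J ≃g GI n T J) (sB : Fin T) (hsB : (J sB : ZMod n) = 1) :
    ∃ q : ZMod n, IsUnit q ∧
      (q = (J ((φ (sB, 0)).1) : ZMod n) ∨ q = -(J ((φ (sB, 0)).1) : ZMod n)) ∧
      ∀ s : Fin T, ∃ s' : Fin T,
        q * (J s : ZMod n) = (J s' : ZMod n) ∨ q * (J s : ZMod n) = -(J s' : ZMod n) := by
  haveI : NeZero n := ⟨by omega⟩
  have two_ne : (2 : ZMod n) ≠ 0 := by
    have : ((2 : ℕ) : ZMod n) ≠ 0 := by
      rw [Ne, ZMod.natCast_eq_zero_iff]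
      intro h
      exact absurd (Nat.le_of_dvd (by norm_num) h) (by omega)
    simpa using this
  set g : ZMod n → ZMod n := fun v => (φ (sB, v)).2 with hgdef
  -- all layers have the same second coordinate under φ
  have hg : ∀ (s : Fin T) (v : ZMod n), (φ (s, v)).2 = g v := by
    intro s v
    rcases eq_or_ne s sB with rfl | hs
    · rfl
    · exact spoke_pres hJ0 hJ2 hT φ (x := (s, v)) (y := (sB, v))
        ((GI_adj_iff J hJ0 _ _).mpr (Or.inl ⟨rfl, hs⟩)) rfl
  have hg' : ∀ (s : Fin T) (w : ZMod n), (φ.symm (s, w)).2 = (φ.symm (sB, w)).2 := by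
    intro s w
    rcases eq_or_ne s sB with rfl | hs
    · rfl
    · exact spoke_pres hJ0 hJ2 hT φ.symm (x := (s, w)) (y := (sB, w))
        ((GI_adj_iff J hJ0 _ _).mpr (Or.inl ⟨rfl, hs⟩)) rfl
  have gbij : Function.Bijective g := by
    refine Function.bijective_iff_has_inverse.mpr
      ⟨fun w => (φ.symm (sB, w)).2, fun v => ?_, fun w => ?_⟩
    · show (φ.symm (sB, g v)).2 = v
      have h1 : φ (sB, v) = ((φ (sB, v)).1, g v) := rfl
      rw [← hg' (φ (sB, v)).1 (g v), ← h1, φ.symm_apply_apply]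
    · show g ((φ.symm (sB, w)).2) = w
      have h1 : φ.symm (sB, w) = ((φ.symm (sB, w)).1, (φ.symm (sB, w)).2) := rfl
      rw [← hg (φ.symm (sB, w)).1 ((φ.symm (sB, w)).2), ← h1, φ.apply_symm_apply]
  -- the image layer of the base layer is constant
  have hstepadj : ∀ v : ZMod n, (GI n T J).Adj (sB, v) (sB, v + 1) := by
    intro v
    exact (GI_adj_iff J hJ0 _ _).mpr (Or.inr ⟨rfl, Or.inl (by rw [hsB])⟩)
  have hS1 : ∀ v : ZMod n, (φ (sB, v)).1 = (φ (sB, v + 1)).1 := by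
    intro v
    exact layer_pres hJ0 hJ2 hT φ (hstepadj v) rfl
  have hS : ∀ v : ZMod n, (φ (sB, v)).1 = (φ (sB, 0)).1 := by
    have hnat : ∀ l : ℕ, (φ (sB, (l : ZMod n))).1 = (φ (sB, 0)).1 := by
      intro l
      induction l with
      | zero => norm_num
      | succ m ih =>
        push_cast
        rw [← hS1 (m : ZMod n)]
        push_cast at ih
        exact ih
    intro v
    obtain ⟨l, rfl⟩ := ZMod.natCast_zmod_surjective (n := n) v
    exact hnat l
  set SC : Fin T := (φ (sB, 0)).1 with hSC
  set cS : ZMod n := (J SC : ZMod n) with hcS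
  have hstep : ∀ v : ZMod n, g (v + 1) = g v + cS ∨ g v = g (v + 1) + cS := by
    intro v
    have hadj := φ.map_adj_iff.mpr (hstepadj v)
    rcases (GI_adj_iff J hJ0 _ _).mp hadj with ⟨_, hne⟩ | ⟨_, h⟩
    · exact absurd ((hS v).trans (hS (v + 1)).symm) hne
    · rw [hg sB v, hg sB (v + 1), hS v] at h
      exact h
  set q : ZMod n := g 1 - g 0 with hq
  have hq0 : q = cS ∨ q = -cS := by
    rcases hstep 0 with h | h
    · left; rw [hq]; rw [zero_add] at h; linear_combination h
    · right; rw [hq]; rw [zero_add] at h; linear_combination -h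
  have hcS2 : cS + cS ≠ 0 := hJ2 SC
  have hsame : ∀ v : ZMod n, g (v + 1) = g v + q := by
    have hnat : ∀ l : ℕ, g ((l : ZMod n) + 1) = g (l : ZMod n) + q := by
      intro l
      induction l with
      | zero => push_cast; rw [hq]; ring
      | succ m ih =>
        push_cast
        push_cast at ih
        have hql : q = g ((m : ZMod n) + 1) - g (m : ZMod n) := by linear_combination -ih
        rcases hstep ((m : ZMod n)) with h1 | h1 <;>
          rcases hstep ((m : ZMod n) + 1) with h2 | h2
        · rw [hql]; linear_combination h2 - h1
        · exfalso
          have hCA : g ((m : ZMod n) + 1 + 1) = g (m : ZMod n) := by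
            linear_combination h1 - h2
          have := gbij.injective hCA
          have h20 : (2 : ZMod n) = 0 := by linear_combination this
          exact two_ne h20
        · exfalso
          have hCA : g ((m : ZMod n) + 1 + 1) = g (m : ZMod n) := by
            linear_combination h2 - h1
          have := gbij.injective hCA
          have h20 : (2 : ZMod n) = 0 := by linear_combination this
          exact two_ne h20
        · rw [hql]
          linear_combination h1 - h2
    intro v
    obtain ⟨l, rfl⟩ := ZMod.natCast_zmod_surjective (n := n) v
    exact hnat l
  have haffine : ∀ v : ZMod n, g v = g 0 + q * v := by
    have hnat : ∀ l : ℕ, g (l : ZMod n) = g 0 + q * (l : ZMod n) := by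
      intro l
      induction l with
      | zero => push_cast; ring
      | succ m ih =>
        push_cast
        push_cast at ih
        rw [hsame (m : ZMod n), ih]
        ring
    intro v
    obtain ⟨l, rfl⟩ := ZMod.natCast_zmod_surjective (n := n) v
    exact hnat l
  have hqunit : IsUnit q := by
    obtain ⟨v, hv⟩ := gbij.surjective (g 0 + 1)
    refine IsUnit.of_mul_eq_one (a := q) v ?_
    have := haffine v
    rw [hv] at this
    linear_combination -this
  refine ⟨q, hqunit, hq0, fun s => ?_⟩
  have hedge : (GI n T J).Adj (s, 0) (s, (J s : ZMod n)) := by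
    refine (GI_adj_iff J hJ0 _ _).mpr (Or.inr ⟨rfl, Or.inl ?_⟩)
    rw [zero_add]
  have hadj := φ.map_adj_iff.mpr hedge
  have hfst := layer_pres hJ0 hJ2 hT φ hedge rfl
  rcases (GI_adj_iff J hJ0 _ _).mp hadj with ⟨_, hne⟩ | ⟨_, h⟩
  · exact absurd hfst hne
  · refine ⟨(φ ((s, 0) : Fin T × ZMod n)).1, ?_⟩
    rw [hg s 0, hg s ((J s : ZMod n))] at h
    have h0 := haffine ((J s : ZMod n))
    rcases h with h | h
    · left; linear_combination h - h0
    · right; linear_combination -h - h0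
end Part3

/-- The group-theoretic construction: if the values `±(j b)` form a (unit) group,
then every even multiple cover is Cayley. -/
theorem cayley_construction (n t k m : ℕ) (hn : 3 ≤ n) (ht : 1 ≤ t) (hm : 1 ≤ m)
    (hk : k = 2 * m) (j : Fin t → ℤ)
    (hj0 : ∀ b, (j b : ZMod n) ≠ 0)
    (hj2 : ∀ b, (j b : ZMod n) + (j b : ZMod n) ≠ 0)
    (hinj : ∀ b b' : Fin t,
      ((j b : ZMod n) = (j b' : ZMod n) ∨ (j b : ZMod n) = -(j b' : ZMod n)) → b = b')
    (hone : ∃ b, (j b : ZMod n) = 1)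
    (hunit : ∀ b, IsUnit (j b : ZMod n))
    (hcl : ∀ b b' : Fin t, ∃ b'',
      (j b : ZMod n) * (j b' : ZMod n) = (j b'' : ZMod n) ∨
      (j b : ZMod n) * (j b' : ZMod n) = -(j b'' : ZMod n)) :
    IsCayley (GI n (k * t) (rep k t j)) := by
  haveI : NeZero n := ⟨by omega⟩
  haveI : NeZero m := ⟨by omega⟩
  have htpos : 0 < t := ht
  have hrep : ∀ s : Fin (k * t),
      (rep k t j s : ZMod n) = (j ⟨s.val % t, Nat.mod_lt _ htpos⟩ : ZMod n) := fun s => rfl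
  have hJ0' : ∀ s : Fin (k * t), ((rep k t j s : ℤ) : ZMod n) ≠ 0 := by
    intro s; rw [hrep]; exact hj0 _
  -- the subgroup of units
  set S : Set (ZMod n)ˣ :=
    {u | ∃ b, (u : ZMod n) = (j b : ZMod n) ∨ (u : ZMod n) = -(j b : ZMod n)} with hSdef
  have hSmul : ∀ {u v : (ZMod n)ˣ}, u ∈ S → v ∈ S → u * v ∈ S := by
    rintro u v ⟨b, hb | hb⟩ ⟨b', hb' | hb'⟩ <;>
      obtain ⟨b'', h | h⟩ := hcl b b' <;>
        refine ⟨b'', ?_⟩ <;> rw [Units.val_mul, hb, hb'] <;>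
          first
            | exact Or.inl (by linear_combination h)
            | exact Or.inr (by linear_combination h)
            | exact Or.inl (by linear_combination -h)
            | exact Or.inr (by linear_combination -h)
  have hS1 : (1 : (ZMod n)ˣ) ∈ S := by
    obtain ⟨b, hb⟩ := hone
    exact ⟨b, Or.inl (by rw [Units.val_one, hb])⟩
  have hSpow : ∀ (l : ℕ) {u : (ZMod n)ˣ}, u ∈ S → u ^ (l + 1) ∈ S := by
    intro l
    induction l with
    | zero => intro u hu; rwa [pow_one]
    | succ p ih =>
      intro u hu
      rw [pow_succ]
      exact hSmul (ih hu) hu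
  have hSinv : ∀ {u : (ZMod n)ˣ}, u ∈ S → u⁻¹ ∈ S := by
    intro u hu
    have ho : 1 ≤ orderOf u := orderOf_pos u
    have hmu : u * u ^ (orderOf u - 1) = 1 := by
      rw [← pow_succ']
      have : orderOf u - 1 + 1 = orderOf u := by omega
      rw [this, pow_orderOf_eq_one]
    have hinveq : u⁻¹ = u ^ (orderOf u - 1) := by
      rw [eq_comm, eq_inv_iff_mul_eq_one, mul_comm]
      exact hmu
    rcases Nat.eq_zero_or_pos (orderOf u - 1) with h0 | h0
    · rw [hinveq, h0, pow_zero]; exact hS1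
    · obtain ⟨l, hl⟩ : ∃ l, orderOf u - 1 = l + 1 := ⟨orderOf u - 2, by omega⟩
      rw [hinveq, hl]
      exact hSpow l hu
  set Ggrp : Subgroup (ZMod n)ˣ :=
    { carrier := S
      one_mem' := hS1
      mul_mem' := fun ha hb => hSmul ha hb
      inv_mem' := fun ha => hSinv ha } with hGdef
  -- unique representation of a unit in the group
  have hrepex : ∀ u : (ZMod n)ˣ, u ∈ S → ∃! p : Fin t × Bool,
      (u : ZMod n) = cond p.2 ((j p.1 : ZMod n)) (-(j p.1 : ZMod n)) := by
    rintro u ⟨b, hb | hb⟩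
    · refine ⟨(b, true), by simpa using hb, ?_⟩
      rintro ⟨b', bb⟩ hp
      cases bb with
      | false =>
        exfalso
        rw [Bool.cond_false] at hp
        have h1 : (j b' : ZMod n) = -(j b : ZMod n) := by linear_combination hp - hb
        have := hinj b' b (Or.inr h1)
        subst this
        exact hj2 b' (by linear_combination h1)
      | true =>
        rw [Bool.cond_true] at hp
        have h1 : (j b' : ZMod n) = (j b : ZMod n) := by linear_combination hb - hp
        have := hinj b' b (Or.inl h1)
        subst this
        rfl
    · refine ⟨(b, false), by simpa using hb, ?_⟩
      rintro ⟨b', bb⟩ hp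
      cases bb with
      | false =>
        rw [Bool.cond_false] at hp
        have h1 : (j b' : ZMod n) = (j b : ZMod n) := by linear_combination hp - hb
        have := hinj b' b (Or.inl h1)
        subst this
        rfl
      | true =>
        exfalso
        rw [Bool.cond_true] at hp
        have h1 : (j b' : ZMod n) = -(j b : ZMod n) := by linear_combination hb - hp
        have := hinj b' b (Or.inr h1)
        subst this
        exact hj2 b' (by linear_combination h1)
  have hmemS : ∀ u : ↥Ggrp, (u : (ZMod n)ˣ) ∈ S := fun u => u.2
  -- the layer/sign data of each group element
  obtain ⟨pB, hpB, hpBu⟩ : ∃ pB : ↥Ggrp → Fin t × Bool,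
      (∀ u : ↥Ggrp, ((u : (ZMod n)ˣ) : ZMod n)
        = cond (pB u).2 ((j (pB u).1 : ZMod n)) (-(j (pB u).1 : ZMod n))) ∧
      (∀ (u : ↥Ggrp) (p : Fin t × Bool),
        ((u : (ZMod n)ˣ) : ZMod n) = cond p.2 ((j p.1 : ZMod n)) (-(j p.1 : ZMod n)) →
          p = pB u) := by
    refine ⟨fun u => (hrepex u (hmemS u)).exists.choose,
      fun u => (hrepex u (hmemS u)).exists.choose_spec, fun u p hp => ?_⟩
    exact (hrepex u (hmemS u)).unique hp (hrepex u (hmemS u)).exists.choose_spec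
  -- the bijection between the parameter group and the layers
  have hbound : ∀ p : ↥Ggrp × ZMod m,
      (2 * p.2.val + cond (pB p.1).2 0 1) * t + ((pB p.1).1).val < k * t := by
    intro p
    have h1 : p.2.val < m := ZMod.val_lt p.2
    have h2 : ((pB p.1).1).val < t := (pB p.1).1.isLt
    have h3 : cond (pB p.1).2 0 1 ≤ 1 := by cases (pB p.1).2 <;> simp
    have h4 : 2 * p.2.val + cond (pB p.1).2 0 1 + 1 ≤ k := by omega
    calc (2 * p.2.val + cond (pB p.1).2 0 1) * t + ((pB p.1).1).val
        < (2 * p.2.val + cond (pB p.1).2 0 1) * t + t := by omega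
      _ = (2 * p.2.val + cond (pB p.1).2 0 1 + 1) * t := by ring
      _ ≤ k * t := Nat.mul_le_mul_right t h4
  set Θf : ↥Ggrp × ZMod m → Fin (k * t) :=
    fun p => ⟨(2 * p.2.val + cond (pB p.1).2 0 1) * t + ((pB p.1).1).val, hbound p⟩
    with hΘf
  have hmodt : ∀ p, (Θf p).val % t = ((pB p.1).1).val := by
    intro p
    show ((2 * p.2.val + cond (pB p.1).2 0 1) * t + ((pB p.1).1).val) % t
      = ((pB p.1).1).val
    rw [mul_comm, Nat.mul_add_mod]
    exact Nat.mod_eq_of_lt (pB p.1).1.isLt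
  have hdivt : ∀ p, (Θf p).val / t = 2 * p.2.val + cond (pB p.1).2 0 1 := by
    intro p
    show ((2 * p.2.val + cond (pB p.1).2 0 1) * t + ((pB p.1).1).val) / t
      = 2 * p.2.val + cond (pB p.1).2 0 1
    rw [mul_comm, Nat.mul_add_div htpos, Nat.div_eq_of_lt (pB p.1).1.isLt, Nat.add_zero]
  have hΘinj : Function.Injective Θf := by
    intro p p' h
    have hv := congrArg Fin.val h
    have e1 : ((pB p.1).1).val = ((pB p'.1).1).val := by
      rw [← hmodt p, ← hmodt p', hv]
    have e2 : 2 * p.2.val + cond (pB p.1).2 0 1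
        = 2 * p'.2.val + cond (pB p'.1).2 0 1 := by
      rw [← hdivt p, ← hdivt p', hv]
    have hbb : (pB p.1).2 = (pB p'.1).2 := by
      cases hc1 : (pB p.1).2 <;> cases hc2 : (pB p'.1).2 <;>
        rw [hc1, hc2] at e2 <;> simp at e2 <;> first | rfl | omega
    have hyy : p.2 = p'.2 := by
      have : p.2.val = p'.2.val := by
        cases hc1 : (pB p.1).2 <;> rw [hc1] at e2 <;> rw [hc1] at hbb <;>
          rw [← hbb] at e2 <;> simp at e2 <;> omega
      exact ZMod.val_injective _ this
    have hpp : pB p.1 = pB p'.1 := Prod.ext (Fin.ext e1) hbb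
    have huu : p.1 = p'.1 := by
      have v1 := hpB p.1
      have v2 := hpB p'.1
      rw [hpp] at v1
      have : ((p.1 : (ZMod n)ˣ) : ZMod n) = ((p'.1 : (ZMod n)ˣ) : ZMod n) :=
        v1.trans v2.symm
      exact Subtype.ext (Units.ext this)
    exact Prod.ext huu hyy
  have hΘsurj : Function.Surjective Θf := by
    intro s
    have hbs : s.val % t < t := Nat.mod_lt _ htpos
    set b : Fin t := ⟨s.val % t, hbs⟩ with hbdef
    have ha : s.val / t < k := by
      rw [Nat.div_lt_iff_lt_mul htpos]
      have := s.isLt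
      omega
    obtain ⟨u0, hu0⟩ := hunit b
    have hadiv : s.val / t / 2 < m := by omega
    by_cases hpar : (s.val / t) % 2 = 0
    · refine ⟨(⟨u0, ⟨b, Or.inl hu0⟩⟩, ((s.val / t / 2 : ℕ) : ZMod m)), ?_⟩
      have hp : pB (⟨u0, ⟨b, Or.inl hu0⟩⟩ : ↥Ggrp) = (b, true) :=
        (hpBu _ (b, true) (by simpa using hu0)).symm
      apply Fin.ext
      show (2 * (((s.val / t / 2 : ℕ) : ZMod m)).val + cond (pB _).2 0 1) * t
        + ((pB _).1).val = s.val
      rw [hp]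
      simp only [Bool.cond_true]
      rw [ZMod.val_cast_of_lt hadiv]
      have : 2 * (s.val / t / 2) + 0 = s.val / t := by omega
      rw [this]
      show (s.val / t) * t + s.val % t = s.val
      rw [mul_comm]
      exact Nat.div_add_mod s.val t
    · refine ⟨(⟨-u0, ⟨b, Or.inr (by simp [hu0])⟩⟩, ((s.val / t / 2 : ℕ) : ZMod m)), ?_⟩
      have hp : pB (⟨-u0, ⟨b, Or.inr (by simp [hu0])⟩⟩ : ↥Ggrp) = (b, false) :=
        (hpBu _ (b, false) (by simp [hu0])).symm
      apply Fin.ext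
      show (2 * (((s.val / t / 2 : ℕ) : ZMod m)).val + cond (pB _).2 0 1) * t
        + ((pB _).1).val = s.val
      rw [hp]
      simp only [Bool.cond_false]
      rw [ZMod.val_cast_of_lt hadiv]
      have : 2 * (s.val / t / 2) + 1 = s.val / t := by omega
      rw [this]
      show (s.val / t) * t + s.val % t = s.val
      rw [mul_comm]
      exact Nat.div_add_mod s.val t
  set Θ : (↥Ggrp × ZMod m) ≃ Fin (k * t) := Equiv.ofBijective Θf ⟨hΘinj, hΘsurj⟩ with hΘdef
  have hΘapp : ∀ p, Θ p = Θf p := fun _ => rfl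
  -- the layer value of Θ p is ± the unit of p
  have hΘrep : ∀ p : ↥Ggrp × ZMod m,
      ((rep k t j (Θ p) : ℤ) : ZMod n) = ((p.1 : (ZMod n)ˣ) : ZMod n) ∨
      ((rep k t j (Θ p) : ℤ) : ZMod n) = -((p.1 : (ZMod n)ˣ) : ZMod n) := by
    intro p
    have h1 : (rep k t j (Θ p) : ZMod n) = (j ((pB p.1).1) : ZMod n) := by
      rw [hΘapp, hrep]
      congr 1
      exact congrArg j (Fin.ext (hmodt p))
    have v := hpB p.1
    cases hc : (pB p.1).2 <;> rw [hc] at v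
    · rw [Bool.cond_false] at v
      right
      rw [h1, v]
      ring
    · rw [Bool.cond_true] at v
      left
      rw [h1, v]
    -- abbreviation for the underlying ring element of a group element
  set U : ↥Ggrp → ZMod n := fun u => ((u : (ZMod n)ˣ) : ZMod n) with hUdef
  have hUmul : ∀ a b : ↥Ggrp, U (a * b) = U a * U b := by intro a b; simp [hUdef]
  have hUone : U 1 = 1 := by simp [hUdef]
  have hUinvmul : ∀ a : ↥Ggrp, U a⁻¹ * U a = 1 := by intro a; simp [hUdef]
  have hUmulinv : ∀ a : ↥Ggrp, U a * U a⁻¹ = 1 := by intro a; simp [hUdef]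
  have hUunit : ∀ a : ↥Ggrp, IsUnit (U a) := fun a => ⟨(a : (ZMod n)ˣ), rfl⟩
  -- translation permutation on parameters
  set Tr : ↥Ggrp → ZMod m → Equiv.Perm (↥Ggrp × ZMod m) := fun u y =>
    { toFun := fun p => (u * p.1, y + p.2)
      invFun := fun p => (u⁻¹ * p.1, -y + p.2)
      left_inv := fun p => by simp
      right_inv := fun p => by simp } with hTr
  -- affine permutation on the cyclic part
  set Af : ↥Ggrp → ZMod n → Equiv.Perm (ZMod n) := fun u w =>
    { toFun := fun v => U u * v + w
      invFun := fun v => U u⁻¹ * (v - w)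
      left_inv := fun v => by
        show U u⁻¹ * (U u * v + w - w) = v
        rw [add_sub_cancel_right, ← mul_assoc, hUinvmul, one_mul]
      right_inv := fun v => by
        show U u * (U u⁻¹ * (v - w)) + w = v
        rw [← mul_assoc, hUmulinv, one_mul, sub_add_cancel] } with hAf
  set Pf : ↥Ggrp → ZMod m → ZMod n → Equiv.Perm (Fin (k * t) × ZMod n) := fun u y w =>
    Equiv.prodCongr (Θ.symm.trans ((Tr u y).trans Θ)) (Af u w) with hPf
  have hPapp : ∀ u y w x, Pf u y w x
      = (Θ (u * (Θ.symm x.1).1, y + (Θ.symm x.1).2), U u * x.2 + w) := by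
    intro u y w x
    rfl
  have hPmul : ∀ u y w u' y' w',
      (Pf u' y' w') * (Pf u y w) = Pf (u' * u) (y' + y) (U u' * w + w') := by
    intro u y w u' y' w'
    apply Equiv.ext
    intro x
    rw [Equiv.Perm.mul_apply, hPapp, hPapp, hPapp]
    apply Prod.ext
    · show Θ (u' * (Θ.symm (Θ _)).1, y' + (Θ.symm (Θ _)).2) = _
      rw [Equiv.symm_apply_apply]
      show Θ (u' * (u * (Θ.symm x.1).1), y' + (y + (Θ.symm x.1).2)) = _
      rw [← mul_assoc, ← add_assoc]
    · show U u' * (U u * x.2 + w) + w' = U (u' * u) * x.2 + (U u' * w + w')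
      rw [hUmul]
      ring
  have hPone : Pf 1 0 0 = 1 := by
    apply Equiv.ext
    intro x
    rw [hPapp]
    apply Prod.ext
    · show Θ (1 * (Θ.symm x.1).1, 0 + (Θ.symm x.1).2) = x.1
      rw [one_mul, zero_add]
      exact Θ.apply_symm_apply x.1
    · show U 1 * x.2 + 0 = x.2
      rw [hUone, one_mul, add_zero]
  have hPinv : ∀ u y w, (Pf u y w)⁻¹ = Pf u⁻¹ (-y) (-(U u⁻¹ * w)) := by
    intro u y w
    have h : Pf u⁻¹ (-y) (-(U u⁻¹ * w)) * Pf u y w = 1 := by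
      rw [hPmul, inv_mul_cancel, neg_add_cancel]
      have h2 : U u⁻¹ * w + -(U u⁻¹ * w) = 0 := by ring
      rw [h2, hPone]
    exact inv_eq_of_mul_eq_one_left h
  -- the candidate regular subgroup
  set Hgrp : Subgroup (Equiv.Perm (Fin (k * t) × ZMod n)) :=
    { carrier := {π | ∃ u y w, π = Pf u y w}
      one_mem' := ⟨1, 0, 0, hPone.symm⟩
      mul_mem' := by
        rintro a b ⟨u, y, w, rfl⟩ ⟨u', y', w', rfl⟩
        exact ⟨u * u', y + y', U u * w' + w, hPmul u' y' w' u y w⟩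
      inv_mem' := by
        rintro a ⟨u, y, w, rfl⟩
        exact ⟨u⁻¹, -y, -(U u⁻¹ * w), hPinv u y w⟩ } with hHdef
  -- helper iff lemmas
  have hconv : ∀ a b c : ZMod n, (b = a + c ∨ a = b + c) ↔ (b - a = c ∨ b - a = -c) := by
    intro a b c
    constructor
    · rintro (h | h)
      · exact Or.inl (by linear_combination h)
      · exact Or.inr (by linear_combination -h)
    · rintro (h | h)
      · exact Or.inl (by linear_combination h)
      · exact Or.inr (by linear_combination -h)
  have hlayer_iff : ∀ c c' Uu d : ZMod n, IsUnit Uu →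
      (c' = Uu * c ∨ c' = -(Uu * c)) →
      ((d = c ∨ d = -c) ↔ (Uu * d = c' ∨ Uu * d = -c')) := by
    rintro c c' Uu d hUu (rfl | rfl)
    · constructor
      · rintro (rfl | rfl)
        · exact Or.inl rfl
        · exact Or.inr (by ring)
      · rintro (h | h)
        · exact Or.inl (hUu.mul_left_cancel h)
        · exact Or.inr (hUu.mul_left_cancel (by linear_combination h))
    · constructor
      · rintro (rfl | rfl)
        · exact Or.inr (by ring)
        · exact Or.inl (by ring)
      · rintro (h | h)
        · exact Or.inr (hUu.mul_left_cancel (by linear_combination h))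
        · exact Or.inl (hUu.mul_left_cancel (by linear_combination h))
  -- adjacency preservation
  have hPadj : ∀ (u : ↥Ggrp) (y : ZMod m) (w : ZMod n) (x x' : Fin (k * t) × ZMod n),
      (GI n (k * t) (rep k t j)).Adj x x' ↔
      (GI n (k * t) (rep k t j)).Adj (Pf u y w x) (Pf u y w x') := by
    intro u y w x x'
    set E : Equiv.Perm (Fin (k * t)) := Θ.symm.trans ((Tr u y).trans Θ) with hE
    have hPE : ∀ z : Fin (k * t) × ZMod n, Pf u y w z = (E z.1, U u * z.2 + w) :=
      fun z => rfl
    rw [hPE, hPE, GI_adj_iff _ hJ0', GI_adj_iff _ hJ0']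
    dsimp only
    set c : ZMod n := ((rep k t j x.1 : ℤ) : ZMod n) with hcdef
    set c' : ZMod n := ((rep k t j (E x.1) : ℤ) : ZMod n) with hc'def
    have hx1 : x.1 = Θ (Θ.symm x.1) := (Θ.apply_symm_apply x.1).symm
    have hx2 : E x.1 = Θ (u * (Θ.symm x.1).1, y + (Θ.symm x.1).2) := rfl
    have hcval : c = U ((Θ.symm x.1).1) ∨ c = -U ((Θ.symm x.1).1) := by
      have h5 := hΘrep (Θ.symm x.1)
      rw [Θ.apply_symm_apply] at h5
      exact h5
    have hc'val : c' = U u * U ((Θ.symm x.1).1) ∨ c' = -(U u * U ((Θ.symm x.1).1)) := by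
      rw [← hUmul]
      exact hΘrep (u * (Θ.symm x.1).1, y + (Θ.symm x.1).2)
    have hcc : c' = U u * c ∨ c' = -(U u * c) := by
      rcases hcval with h | h <;> rcases hc'val with h' | h'
      · exact Or.inl (by rw [h, h'])
      · exact Or.inr (by rw [h, h'])
      · exact Or.inr (by rw [h, h']; ring)
      · exact Or.inl (by rw [h, h']; ring)
    have inner := hlayer_iff c c' (U u) (x'.2 - x.2) (hUunit u) hcc
    have hEiff : ∀ s s' : Fin (k * t), E s = E s' ↔ s = s' := fun s s' => E.injective.eq_iff
    have hdiff2 : (U u * x'.2 + w) - (U u * x.2 + w) = U u * (x'.2 - x.2) := by ring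
    constructor
    · rintro (⟨h2, h1⟩ | ⟨h1, h2⟩)
      · exact Or.inl ⟨by rw [h2], fun hh => h1 ((hEiff _ _).mp hh)⟩
      · refine Or.inr ⟨by rw [h1], ?_⟩
        rw [hconv] at h2
        rw [hconv, hdiff2]
        exact inner.mp h2
    · rintro (⟨h2, h1⟩ | ⟨h1, h2⟩)
      · refine Or.inl ⟨?_, fun hh => h1 (by rw [hh])⟩
        have h3 : U u * x.2 = U u * x'.2 := by linear_combination h2
        exact (hUunit u).mul_left_cancel h3
      · refine Or.inr ⟨(hEiff _ _).mp h1, ?_⟩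
        rw [hconv] at h2 ⊢
        rw [hdiff2] at h2
        exact inner.mpr h2
  -- regularity
  refine ⟨Hgrp, ?_, ?_⟩
  · rintro π ⟨u, y, w, rfl⟩ x x'
    exact hPadj u y w x x'
  · intro x x'
    set p : ↥Ggrp × ZMod m := Θ.symm x.1 with hp
    set p' : ↥Ggrp × ZMod m := Θ.symm x'.1 with hp'
    set u : ↥Ggrp := p'.1 * p.1⁻¹ with hu
    set yy : ZMod m := p'.2 - p.2 with hyy
    set w : ZMod n := x'.2 - U u * x.2 with hw
    have happ : Pf u yy w x = x' := by
      rw [hPapp]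
      apply Prod.ext
      · show Θ (p'.1 * p.1⁻¹ * p.1, p'.2 - p.2 + p.2) = x'.1
        rw [inv_mul_cancel_right, sub_add_cancel]
        show Θ (p'.1, p'.2) = x'.1
        rw [← Prod.mk.eta (p := p'), hp', Θ.apply_symm_apply]
      · show U u * x.2 + (x'.2 - U u * x.2) = x'.2
        ring
    refine ⟨Pf u yy w, ⟨⟨u, yy, w, rfl⟩, happ⟩, ?_⟩
    rintro π ⟨⟨u1, y1, w1, rfl⟩, happ'⟩
    have e1 : Θ (u1 * p.1, y1 + p.2) = Θ (u * p.1, yy + p.2) := by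
      have a1 := congrArg Prod.fst happ'
      have a2 := congrArg Prod.fst happ
      rw [hPapp] at a1 a2
      dsimp only at a1 a2
      rw [← hp] at a1 a2
      exact a1.trans a2.symm
    have e2 := Θ.injective e1
    have eu : u1 = u := by
      have h6 := congrArg Prod.fst e2
      dsimp only at h6
      exact mul_right_cancel h6
    have ey : y1 = yy := by
      have h6 := congrArg Prod.snd e2
      dsimp only at h6
      exact add_right_cancel h6
    have ew : w1 = w := by
      have a1 := congrArg Prod.snd happ'
      have a2 := congrArg Prod.snd happ
      rw [hPapp] at a1 a2
      dsimp only at a1 a2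
      rw [eu] at a1
      have h6 := a1.trans a2.symm
      exact add_left_cancel h6
    rw [eu, ey, ew]

set_option maxHeartbeats 1000000

/-- if `j` is primitive and both `GI(n;j)` and `GI(n;[2]j)` are
vertex-transitive, then `GI(n;[k]j)` is a Cayley graph for every even `k ≥ 2`. -/
theorem GI_even_rep_cayley (n t : ℕ) (hn : 3 ≤ n) (ht : 1 ≤ t) (j : Fin t → ℤ)
    (hj : ∀ s, (j s : ZMod n) ≠ 0 ∧ ((2 * j s : ℤ) : ZMod n) ≠ 0)
    (hprim : PrimitiveSeq n j)
    (hvt1 : IsVertexTransitive (GI n t j))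
    (hvt2 : IsVertexTransitive (GI n (2 * t) (rep 2 t j))) :
    ∀ k : ℕ, 2 ≤ k → Even k → IsCayley (GI n (k * t) (rep k t j)) := by
  intro k hk2 hkeven
  obtain ⟨m, hm⟩ : ∃ m, k = 2 * m := by
    obtain ⟨r, hr⟩ := hkeven
    exact ⟨r, by omega⟩
  have hm1 : 1 ≤ m := by omega
  have hj0 : ∀ b, (j b : ZMod n) ≠ 0 := fun b => (hj b).1
  have hj2 : ∀ b, (j b : ZMod n) + (j b : ZMod n) ≠ 0 := by
    intro b h
    apply (hj b).2
    push_cast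
    linear_combination h
  have hinj : ∀ b b' : Fin t,
      ((j b : ZMod n) = (j b' : ZMod n) ∨ (j b : ZMod n) = -(j b' : ZMod n)) → b = b' := by
    intro b b' h
    by_contra hne
    rcases h with h | h
    · exact (hprim.2 b b' hne).1 h
    · exact (hprim.2 b b' hne).2 h
  have hone := hprim.1
  rcases Nat.lt_or_ge t 2 with ht1 | ht2
  · -- t = 1
    have ht1' : t = 1 := by omega
    subst ht1'
    obtain ⟨b0, hb0⟩ := hone
    have hall : ∀ b : Fin 1, (j b : ZMod n) = 1 := by
      intro b
      have hb : b = b0 := Subsingleton.elim b b0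
      rw [hb, hb0]
    refine cayley_construction n 1 k m hn ht hm1 hm j hj0 hj2 hinj ⟨b0, hb0⟩
      (fun b => by rw [hall b]; exact isUnit_one) (fun b b' => ⟨b0, Or.inl ?_⟩)
    rw [hall b, hall b', hb0, one_mul]
  · -- t ≥ 2
    have hT : 4 ≤ 2 * t := by omega
    have hJ₂val : ∀ s : Fin (2 * t),
        ((rep 2 t j s : ℤ) : ZMod n)
          = (j ⟨s.val % t, Nat.mod_lt _ (by omega)⟩ : ZMod n) := fun s => rfl
    have hJ0₂ : ∀ s : Fin (2 * t), ((rep 2 t j s : ℤ) : ZMod n) ≠ 0 := by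
      intro s
      rw [hJ₂val]
      exact hj0 _
    have hJ2₂ : ∀ s : Fin (2 * t),
        ((rep 2 t j s : ℤ) : ZMod n) + ((rep 2 t j s : ℤ) : ZMod n) ≠ 0 := by
      intro s
      rw [hJ₂val]
      exact hj2 _
    obtain ⟨b0, hb0⟩ := hone
    set sB : Fin (2 * t) := ⟨b0.val, by have := b0.isLt; omega⟩ with hsBdef
    have hsB : ((rep 2 t j sB : ℤ) : ZMod n) = 1 := by
      rw [hJ₂val]
      have he : (⟨sB.val % t, Nat.mod_lt _ (by omega)⟩ : Fin t) = b0 := by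
        apply Fin.ext
        show sB.val % t = b0.val
        have : sB.val = b0.val := rfl
        rw [this]
        exact Nat.mod_eq_of_lt b0.isLt
      rw [he, hb0]
    have hmain : ∀ b₁ : Fin t, IsUnit (j b₁ : ZMod n) ∧
        ∀ b, ∃ b'', (j b₁ : ZMod n) * (j b : ZMod n) = (j b'' : ZMod n) ∨
          (j b₁ : ZMod n) * (j b : ZMod n) = -(j b'' : ZMod n) := by
      intro b₁
      set s₁ : Fin (2 * t) := ⟨b₁.val, by have := b₁.isLt; omega⟩ with hs₁def
      obtain ⟨φ, hφ⟩ := hvt2 (sB, (0 : ZMod n)) (s₁, 0)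
      obtain ⟨q, hqunit, hq0, hqmul⟩ :=
        multiplier hn hJ0₂ hJ2₂ hT φ sB hsB
      have hfst : (φ ((sB, 0) : Fin (2 * t) × ZMod n)).1 = s₁ := by rw [hφ]
      rw [hfst] at hq0
      have hs₁v : ((rep 2 t j s₁ : ℤ) : ZMod n) = (j b₁ : ZMod n) := by
        rw [hJ₂val]
        have he : (⟨s₁.val % t, Nat.mod_lt _ (by omega)⟩ : Fin t) = b₁ :=
          Fin.ext (Nat.mod_eq_of_lt b₁.isLt)
        exact congrArg _ (congrArg j he)
      rw [hs₁v] at hq0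
      constructor
      · rcases hq0 with h | h
        · rw [← h]; exact hqunit
        · have h2 : (j b₁ : ZMod n) = -q := by linear_combination h
          rw [h2]
          exact hqunit.neg
      · intro b
        obtain ⟨s', hs'⟩ := hqmul ⟨b.val, by have := b.isLt; omega⟩
        have hsbv : ((rep 2 t j (⟨b.val, by have := b.isLt; omega⟩ : Fin (2 * t)) : ℤ)
            : ZMod n) = (j b : ZMod n) := by
          rw [hJ₂val]
          have he : (⟨(⟨b.val, by have := b.isLt; omega⟩ : Fin (2 * t)).val % t,
              Nat.mod_lt _ (by omega)⟩ : Fin t) = b :=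
            Fin.ext (Nat.mod_eq_of_lt b.isLt)
          exact congrArg _ (congrArg j he)
        rw [hsbv] at hs'
        refine ⟨⟨s'.val % t, Nat.mod_lt _ (by omega)⟩, ?_⟩
        have hs'v : ((rep 2 t j s' : ℤ) : ZMod n)
            = (j ⟨s'.val % t, Nat.mod_lt _ (by omega)⟩ : ZMod n) := hJ₂val s'
        rw [hs'v] at hs'
        rcases hq0 with h | h <;> rcases hs' with h' | h'
        · left; rw [← h]; exact h'
        · right; rw [← h]; exact h'
        · right; linear_combination (j b : ZMod n) * h - h'
        · left; linear_combination (j b : ZMod n) * h - h'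
    exact cayley_construction n t k m hn ht hm1 hm j hj0 hj2 hinj ⟨b0, hb0⟩
      (fun b => (hmain b).1) (fun b b' => (hmain b).2 b')
end

section
/- Let n ≥ 3, t ≥ 1, and let j : Fin t → ℤ be primitive with j s ≢ 0 (mod n) and 2·(j s) ≢ 0 (mod n) for all s. If GI(n;j) is vertex-transitive but not a Cayley graph, then for every odd integer k > 1 the graph GI(n;[k]j) is not a Cayley graph. -/
open SimpleGraph

namespace GIAux

variable {n t : ℕ} {j : Fin t → ℤ}

/-- Adjacency characterization for `GI`. -/
lemma gi_adj {x y : Fin t × ZMod n} :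
    (GI n t j).Adj x y ↔ x ≠ y ∧
      ((x.2 = y.2 ∧ x.1 ≠ y.1) ∨ (x.1 = y.1 ∧ y.2 = x.2 + (j x.1 : ZMod n)) ∨
        (y.1 = x.1 ∧ x.2 = y.2 + (j y.1 : ZMod n))) := by
  show (SimpleGraph.fromRel _).Adj x y ↔ _
  rw [SimpleGraph.fromRel_adj]
  constructor
  · rintro ⟨hne, (⟨h1, h2⟩ | ⟨h1, h2⟩) | (⟨h1, h2⟩ | ⟨h1, h2⟩)⟩
    · exact ⟨hne, Or.inl ⟨h1, h2⟩⟩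
    · exact ⟨hne, Or.inr (Or.inl ⟨h1, h2⟩)⟩
    · exact ⟨hne, Or.inl ⟨h1.symm, Ne.symm h2⟩⟩
    · exact ⟨hne, Or.inr (Or.inr ⟨h1, h2⟩)⟩
  · rintro ⟨hne, ⟨h1, h2⟩ | ⟨h1, h2⟩ | ⟨h1, h2⟩⟩
    · exact ⟨hne, Or.inl (Or.inl ⟨h1, h2⟩)⟩
    · exact ⟨hne, Or.inl (Or.inr ⟨h1, h2⟩)⟩
    · exact ⟨hne, Or.inr (Or.inr ⟨h1, h2⟩)⟩

lemma adj_spoke {x y : Fin t × ZMod n} (h2 : x.2 = y.2) (h1 : x.1 ≠ y.1) :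
    (GI n t j).Adj x y :=
  gi_adj.mpr ⟨fun h => h1 (congrArg Prod.fst h), Or.inl ⟨h2, h1⟩⟩

lemma adj_layer {x y : Fin t × ZMod n} (hj0 : (j x.1 : ZMod n) ≠ 0)
    (h1 : x.1 = y.1) (h2 : y.2 = x.2 + (j x.1 : ZMod n)) : (GI n t j).Adj x y := by
  refine gi_adj.mpr ⟨?_, Or.inr (Or.inl ⟨h1, h2⟩)⟩
  intro h
  apply hj0
  have : x.2 = y.2 := congrArg Prod.snd h
  rw [h2] at this
  exact (left_eq_add.mp this)

end GIAux

namespace GIAux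

/-- The residue class of a row of `GI(n;[k]j)`. -/
def rcl {k t : ℕ} (r : Fin (k * t)) : Fin t :=
  ⟨(r : ℕ) % t, Nat.mod_lt _ (by
    rcases Nat.eq_zero_or_pos t with ht | ht
    · exact absurd r.isLt (by simp [ht])
    · exact ht)⟩

lemma rep_apply {k t : ℕ} (j : Fin t → ℤ) (r : Fin (k * t)) :
    rep k t j r = j (rcl r) := rfl

/-- Context for the main argument. -/
structure Ctx (n t k : ℕ) (j : Fin t → ℤ) : Prop where
  hn : 3 ≤ n
  ht : 2 ≤ t
  hk : 3 ≤ k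
  hj : ∀ s, (j s : ZMod n) ≠ 0
  prim1 : ∃ s, (j s : ZMod n) = 1
  prim2 : ∀ i k' : Fin t, i ≠ k' →
    (j i : ZMod n) ≠ (j k' : ZMod n) ∧ (j i : ZMod n) ≠ -(j k' : ZMod n)

namespace Ctx

variable {n t k : ℕ} {j : Fin t → ℤ}

lemma tpos (c : Ctx n t k j) : 0 < t := by have := c.ht; omega
lemma kpos (c : Ctx n t k j) : 0 < k := by have := c.hk; omega
lemma hpos (c : Ctx n t k j) : 0 < k * t := Nat.mul_pos c.kpos c.tpos
lemma hle (c : Ctx n t k j) : t ≤ k * t := Nat.le_mul_of_pos_left t c.kpos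
lemma hkt4 (c : Ctx n t k j) : 4 ≤ k * t := by
  have h1 := c.ht; have h2 := c.hk
  calc 4 ≤ 3 * 2 := by norm_num
  _ ≤ k * t := Nat.mul_le_mul h2 h1

lemma two_ne (c : Ctx n t k j) : ((2 : ℕ) : ZMod n) ≠ 0 := by
  haveI : NeZero n := ⟨by have := c.hn; omega⟩
  intro h
  have h2 := (ZMod.natCast_eq_zero_iff 2 n).mp h
  have h3 := Nat.le_of_dvd (by norm_num) h2
  have := c.hn; omega

lemma neg_one_ne_one (c : Ctx n t k j) : (-1 : ZMod n) ≠ 1 := by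
  intro h
  apply c.two_ne
  push_cast
  linear_combination -h

lemma rcl_castLE (c : Ctx n t k j) (s : Fin t) : rcl (Fin.castLE c.hle s) = s := by
  apply Fin.ext
  exact Nat.mod_eq_of_lt s.isLt

lemma hjr (c : Ctx n t k j) (r : Fin (k * t)) : ((rep k t j r : ℤ) : ZMod n) ≠ 0 := by
  rw [rep_apply]; exact c.hj _

/-- Uniqueness of the layer class with given `±` value. -/
lemma uniqJ (c : Ctx n t k j) {cv : ZMod n} {a b : Fin t}
    (ha : (j a : ZMod n) = cv ∨ (j a : ZMod n) = -cv)
    (hb : (j b : ZMod n) = cv ∨ (j b : ZMod n) = -cv) : a = b := by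
  by_contra hne
  obtain ⟨h1, h2⟩ := c.prim2 a b hne
  rcases ha with ha | ha <;> rcases hb with hb | hb
  · exact h1 (ha.trans hb.symm)
  · exact h2 (by rw [ha, hb, neg_neg])
  · exact h2 (by rw [ha, hb])
  · exact h1 (ha.trans hb.symm)

end Ctx

section CN2

variable {n t k : ℕ} {j : Fin t → ℤ}

/-- Having two distinct common neighbours. -/
def CN2 {α : Type*} (G : SimpleGraph α) (x y : α) : Prop :=
  ∃ z w, z ≠ w ∧ G.Adj x z ∧ G.Adj y z ∧ G.Adj x w ∧ G.Adj y w

/-- Any common neighbour of a layer edge is determined. -/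
lemma layer_common (c : Ctx n t k j) {x y z : Fin (k * t) × ZMod n}
    (h1 : x.1 = y.1) (h2 : y.2 = x.2 + ((rep k t j x.1 : ℤ) : ZMod n))
    (hxz : (GI n (k * t) (rep k t j)).Adj x z)
    (hyz : (GI n (k * t) (rep k t j)).Adj y z) :
    z = (x.1, x.2 - ((rep k t j x.1 : ℤ) : ZMod n)) := by
  have hc0 : ((rep k t j x.1 : ℤ) : ZMod n) ≠ 0 := c.hjr x.1
  have hyx : rep k t j y.1 = rep k t j x.1 := by rw [h1]
  rcases gi_adj.mp hxz with ⟨hnxz, (⟨e1, e2⟩ | ⟨e1, e2⟩ | ⟨e1, e2⟩)⟩ <;>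
    rcases gi_adj.mp hyz with ⟨hnyz, (⟨f1, f2⟩ | ⟨f1, f2⟩ | ⟨f1, f2⟩)⟩
  · -- S,S
    exfalso; apply hc0
    have h3 : x.2 = y.2 := e1.trans f1.symm
    rw [h2] at h3; exact (left_eq_add.mp h3)
  · -- S,La
    exact absurd (h1.trans f1) e2
  · -- S,Lb
    exact absurd (f1.trans h1.symm).symm e2
  · -- La,S
    exact absurd (h1.symm.trans e1) f2
  · -- La,La
    exfalso; apply hc0
    rw [hyx] at f2
    linear_combination e2 - f2 - h2
  · -- La,Lb
    exfalso; apply hc0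
    have hz1 : rep k t j z.1 = rep k t j x.1 := by rw [← e1]
    rw [hz1] at f2
    linear_combination h2 - f2 - e2
  · -- Lb,S
    exact absurd (h1.symm.trans e1.symm) f2
  · -- Lb,La
    have hz1 : rep k t j z.1 = rep k t j x.1 := by rw [e1]
    rw [hz1] at e2
    refine Prod.ext e1 ?_
    show z.2 = x.2 - _
    rw [eq_sub_iff_add_eq, ← e2]
  · -- Lb,Lb
    have hz1 : rep k t j z.1 = rep k t j x.1 := by rw [e1]
    rw [hz1] at e2
    refine Prod.ext e1 ?_
    show z.2 = x.2 - _
    rw [eq_sub_iff_add_eq, ← e2]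

end CN2

end GIAux

namespace GIAux

variable {n t k : ℕ} {j : Fin t → ℤ}

/-- A layer edge has no two distinct common neighbours. -/
lemma layer_not_cn2 (c : Ctx n t k j) {x y : Fin (k * t) × ZMod n}
    (hxy : (GI n (k * t) (rep k t j)).Adj x y) (h1 : x.1 = y.1) :
    ¬ CN2 (GI n (k * t) (rep k t j)) x y := by
  rintro ⟨z, w, hzw, hxz, hyz, hxw, hyw⟩
  rcases gi_adj.mp hxy with ⟨hne, (⟨e1, e2⟩ | ⟨e1, e2⟩ | ⟨e1, e2⟩)⟩
  · exact e2 h1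
  · exact hzw ((layer_common c h1 e2 hxz hyz).trans (layer_common c h1 e2 hxw hyw).symm)
  · have h2 : x.2 = y.2 + ((rep k t j y.1 : ℤ) : ZMod n) := e2
    have := layer_common c (x := y) (y := x) h1.symm h2 hyz hxz
    have h3 := layer_common c (x := y) (y := x) h1.symm h2 hyw hxw
    exact hzw (this.trans h3.symm)

/-- A spoke edge has two distinct common neighbours. -/
lemma spoke_cn2 (c : Ctx n t k j) {x y : Fin (k * t) × ZMod n}
    (h2 : x.2 = y.2) (h1 : x.1 ≠ y.1) :
    CN2 (GI n (k * t) (rep k t j)) x y := by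
  classical
  set s : Finset (Fin (k * t)) := ({x.1, y.1} : Finset (Fin (k * t)))ᶜ with hs
  have hcard : 1 < s.card := by
    have hc1 : ({x.1, y.1} : Finset (Fin (k * t))).card ≤ 2 :=
      Finset.card_insert_le _ _ |>.trans (by simp)
    have : s.card = Fintype.card (Fin (k * t)) - ({x.1, y.1} : Finset (Fin (k * t))).card := by
      rw [hs, Finset.card_compl]
    rw [this, Fintype.card_fin]
    have := c.hkt4
    omega
  obtain ⟨a, ha, b, hb, hab⟩ := Finset.one_lt_card.mp hcard
  rw [hs, Finset.mem_compl, Finset.mem_insert, Finset.mem_singleton] at ha hb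
  push_neg at ha hb
  refine ⟨(a, x.2), (b, x.2), ?_, ?_, ?_, ?_, ?_⟩
  · intro h; exact hab (congrArg Prod.fst h)
  · exact adj_spoke rfl (Ne.symm ha.1)
  · exact adj_spoke h2.symm (Ne.symm ha.2)
  · exact adj_spoke rfl (Ne.symm hb.1)
  · exact adj_spoke h2.symm (Ne.symm hb.2)

/-- Adjacency-preserving permutations. -/
def Iso (n t : ℕ) (j : Fin t → ℤ) (f : Equiv.Perm (Fin t × ZMod n)) : Prop :=
  ∀ x y, (GI n t j).Adj x y ↔ (GI n t j).Adj (f x) (f y)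

lemma Iso.one : Iso n t j 1 := fun _ _ => Iff.rfl

lemma Iso.mul {f g : Equiv.Perm (Fin t × ZMod n)} (hf : Iso n t j f) (hg : Iso n t j g) :
    Iso n t j (f * g) := fun x y => (hg x y).trans (hf (g x) (g y))

lemma Iso.inv {f : Equiv.Perm (Fin t × ZMod n)} (hf : Iso n t j f) : Iso n t j f⁻¹ := by
  intro x y
  have := hf (f⁻¹ x) (f⁻¹ y)
  simpa using this.symm

lemma cn2_map {f : Equiv.Perm (Fin (k * t) × ZMod n)} (hf : Iso n (k * t) (rep k t j) f)
    {x y : Fin (k * t) × ZMod n} (h : CN2 (GI n (k * t) (rep k t j)) x y) :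
    CN2 (GI n (k * t) (rep k t j)) (f x) (f y) := by
  obtain ⟨z, w, hzw, h1, h2, h3, h4⟩ := h
  exact ⟨f z, f w, fun hh => hzw (f.injective hh),
    (hf x z).mp h1, (hf y z).mp h2, (hf x w).mp h3, (hf y w).mp h4⟩

/-- Automorphisms map spoke edges to spoke edges. -/
lemma f_spoke (c : Ctx n t k j) {f : Equiv.Perm (Fin (k * t) × ZMod n)}
    (hf : Iso n (k * t) (rep k t j) f) {x y : Fin (k * t) × ZMod n}
    (hxy : (GI n (k * t) (rep k t j)).Adj x y) (h2 : x.2 = y.2) :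
    (f x).2 = (f y).2 := by
  have h1 : x.1 ≠ y.1 := by
    intro h
    exact hxy.ne (Prod.ext h h2)
  have hcn := cn2_map hf (spoke_cn2 c h2 h1)
  have hadj : (GI n (k * t) (rep k t j)).Adj (f x) (f y) := (hf x y).mp hxy
  rcases gi_adj.mp hadj with ⟨hne, (⟨e1, e2⟩ | ⟨e1, e2⟩ | ⟨e1, e2⟩)⟩
  · exact e1
  · exact absurd hcn (layer_not_cn2 c hadj e1)
  · exact absurd hcn (layer_not_cn2 c hadj e1.symm)

/-- Automorphisms map layer edges to layer edges (with the column relation). -/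
lemma f_layer (c : Ctx n t k j) {f : Equiv.Perm (Fin (k * t) × ZMod n)}
    (hf : Iso n (k * t) (rep k t j) f) {x y : Fin (k * t) × ZMod n}
    (hxy : (GI n (k * t) (rep k t j)).Adj x y) (h1 : x.1 = y.1) :
    (f x).1 = (f y).1 ∧
      ((f y).2 = (f x).2 + ((rep k t j (f x).1 : ℤ) : ZMod n) ∨
        (f x).2 = (f y).2 + ((rep k t j (f x).1 : ℤ) : ZMod n)) := by
  have hncn := layer_not_cn2 c hxy h1
  have hadj : (GI n (k * t) (rep k t j)).Adj (f x) (f y) := (hf x y).mp hxy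
  rcases gi_adj.mp hadj with ⟨hne, (⟨e1, e2⟩ | ⟨e1, e2⟩ | ⟨e1, e2⟩)⟩
  · exfalso
    apply hncn
    have := cn2_map hf.inv (spoke_cn2 c e1 e2)
    simpa using this
  · exact ⟨e1, Or.inl e2⟩
  · refine ⟨e1.symm, Or.inr ?_⟩
    have : rep k t j (f y).1 = rep k t j (f x).1 := by rw [e1]
    rw [← this]; exact e2

end GIAux

namespace GIAux

variable {n t k : ℕ} {j : Fin t → ℤ}

/-- The column function of an automorphism. -/
def bfun (c : Ctx n t k j) (f : Equiv.Perm (Fin (k * t) × ZMod n)) (v : ZMod n) : ZMod n :=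
  (f (⟨0, c.hpos⟩, v)).2

/-- The multiplier of an automorphism. -/
def uval (c : Ctx n t k j) (f : Equiv.Perm (Fin (k * t) × ZMod n)) : ZMod n :=
  bfun c f 1 - bfun c f 0

/-- The row-class map of an automorphism. -/
def tauf (c : Ctx n t k j) (f : Equiv.Perm (Fin (k * t) × ZMod n)) (s : Fin t) : Fin t :=
  rcl ((f (Fin.castLE c.hle s, 0)).1)

lemma col_eq (c : Ctx n t k j) {f : Equiv.Perm (Fin (k * t) × ZMod n)}
    (hf : Iso n (k * t) (rep k t j) f) (r : Fin (k * t)) (v : ZMod n) :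
    (f (r, v)).2 = bfun c f v := by
  by_cases h : r = ⟨0, c.hpos⟩
  · rw [h]; rfl
  · exact f_spoke c hf (adj_spoke rfl h) rfl

lemma adj_step (c : Ctx n t k j) (r : Fin (k * t)) (v : ZMod n) :
    (GI n (k * t) (rep k t j)).Adj (r, v) (r, v + ((rep k t j r : ℤ) : ZMod n)) :=
  adj_layer (c.hjr r) rfl rfl

/-- The special layer has value 1. -/
lemma exists_one_row (c : Ctx n t k j) :
    ∃ r₁ : Fin (k * t), ((rep k t j r₁ : ℤ) : ZMod n) = 1 := by
  obtain ⟨s₁, hs₁⟩ := c.prim1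
  refine ⟨Fin.castLE c.hle s₁, ?_⟩
  rw [rep_apply, c.rcl_castLE]; exact hs₁

/-- The key affine property of the column function. -/
lemma bfun_affine (c : Ctx n t k j) {f : Equiv.Perm (Fin (k * t) × ZMod n)}
    (hf : Iso n (k * t) (rep k t j) f) (v : ZMod n) :
    bfun c f v = bfun c f 0 + v * uval c f := by
  haveI : NeZero n := ⟨by have := c.hn; omega⟩
  obtain ⟨r₁, hr₁⟩ := exists_one_row c
  have key : ∀ m : ℕ, (f (r₁, ((m : ℕ) : ZMod n))).1 = (f (r₁, 0)).1 ∧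
      bfun c f (((m + 1 : ℕ)) : ZMod n) - bfun c f ((m : ℕ) : ZMod n) = uval c f := by
    intro m
    induction m with
    | zero =>
      constructor
      · norm_num
      · unfold uval; norm_num
    | succ m ih =>
      have edge : ∀ m' : ℕ, (GI n (k * t) (rep k t j)).Adj
          (r₁, ((m' : ℕ) : ZMod n)) (r₁, ((m' + 1 : ℕ) : ZMod n)) := by
        intro m'
        have h0 := adj_step c r₁ ((m' : ℕ) : ZMod n)
        rw [hr₁] at h0
        have hcast : ((m' : ℕ) : ZMod n) + 1 = ((m' + 1 : ℕ) : ZMod n) := by push_cast; ring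
        rwa [hcast] at h0
      obtain ⟨ih1, ih2⟩ := ih
      have hEm := f_layer c hf (edge m) rfl
      have hrow1 : (f (r₁, ((m + 1 : ℕ) : ZMod n))).1 = (f (r₁, 0)).1 := by
        rw [← hEm.1, ih1]
      refine ⟨hrow1, ?_⟩
      have hEm1 := f_layer c hf (edge (m + 1)) rfl
      have hrow2 : (f (r₁, ((m + 1 + 1 : ℕ) : ZMod n))).1 = (f (r₁, 0)).1 := by
        rw [← hEm1.1, hrow1]
      have d1 : uval c f = ((rep k t j (f (r₁, 0)).1 : ℤ) : ZMod n) ∨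
          uval c f = -((rep k t j (f (r₁, 0)).1 : ℤ) : ZMod n) := by
        rcases hEm.2 with h | h <;> rw [ih1] at h <;>
          rw [col_eq c hf, col_eq c hf] at h
        · left; linear_combination h - ih2
        · right; linear_combination - h - ih2
      have d2 : bfun c f ((m + 1 + 1 : ℕ) : ZMod n) - bfun c f ((m + 1 : ℕ) : ZMod n)
            = ((rep k t j (f (r₁, 0)).1 : ℤ) : ZMod n) ∨
          bfun c f ((m + 1 + 1 : ℕ) : ZMod n) - bfun c f ((m + 1 : ℕ) : ZMod n)
            = -((rep k t j (f (r₁, 0)).1 : ℤ) : ZMod n) := by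
        rcases hEm1.2 with h | h <;> rw [hrow1] at h <;>
          rw [col_eq c hf, col_eq c hf] at h
        · left; linear_combination h
        · right; linear_combination - h
      have hcontra : bfun c f ((m + 1 + 1 : ℕ) : ZMod n) ≠ bfun c f ((m : ℕ) : ZMod n) := by
        intro hBB
        have hcc : (f (r₁, ((m + 1 + 1 : ℕ) : ZMod n))) = (f (r₁, ((m : ℕ) : ZMod n))) := by
          refine Prod.ext (hrow2.trans ih1.symm) ?_
          show (f (r₁, _)).2 = (f (r₁, _)).2
          rw [col_eq c hf, col_eq c hf]
          exact hBB
        have h3 := f.injective hcc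
        have h4 : ((m + 1 + 1 : ℕ) : ZMod n) = ((m : ℕ) : ZMod n) := congrArg Prod.snd h3
        apply c.two_ne
        push_cast at h4 ⊢
        linear_combination h4
      rcases d1 with d1 | d1 <;> rcases d2 with d2 | d2
      · rw [d1]; exact d2
      · exact absurd (by linear_combination d2 + ih2 + d1) hcontra
      · exact absurd (by linear_combination d2 + ih2 + d1) hcontra
      · rw [d1]; exact d2
  have main : ∀ m : ℕ, bfun c f ((m : ℕ) : ZMod n) =
      bfun c f 0 + ((m : ℕ) : ZMod n) * uval c f := by
    intro m
    induction m with
    | zero => norm_num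
    | succ m ih =>
      have h2 := (key m).2
      push_cast at h2 ih ⊢
      linear_combination h2 + ih
  have hv : ((v.val : ℕ) : ZMod n) = v := ZMod.natCast_rightInverse v
  calc bfun c f v = bfun c f ((v.val : ℕ) : ZMod n) := by rw [hv]
  _ = bfun c f 0 + ((v.val : ℕ) : ZMod n) * uval c f := main v.val
  _ = bfun c f 0 + v * uval c f := by rw [hv]

end GIAux

namespace GIAux

variable {n t k : ℕ} {j : Fin t → ℤ}

/-- Key relation between row classes and the multiplier. -/
lemma tau_key0 (c : Ctx n t k j) {f : Equiv.Perm (Fin (k * t) × ZMod n)}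
    (hf : Iso n (k * t) (rep k t j) f) (r : Fin (k * t)) (v : ZMod n) :
    (j (rcl ((f (r, v)).1)) : ZMod n) = uval c f * (j (rcl r) : ZMod n) ∨
    (j (rcl ((f (r, v)).1)) : ZMod n) = -(uval c f * (j (rcl r) : ZMod n)) := by
  have hE := f_layer c hf (adj_step c r v) rfl
  have hcol1 := col_eq c hf r v
  have hcol2 := col_eq c hf r (v + ((rep k t j r : ℤ) : ZMod n))
  have haff1 := bfun_affine c hf v
  have haff2 := bfun_affine c hf (v + ((rep k t j r : ℤ) : ZMod n))
  rcases hE.2 with h | h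
  · left
    rw [hcol1, hcol2, haff1, haff2] at h
    rw [rep_apply] at h
    rw [rep_apply] at h
    linear_combination -h
  · right
    rw [hcol1, hcol2, haff1, haff2] at h
    rw [rep_apply] at h
    rw [rep_apply] at h
    linear_combination - h

/-- The image row class only depends on the row class. -/
lemma tau_spec (c : Ctx n t k j) {f : Equiv.Perm (Fin (k * t) × ZMod n)}
    (hf : Iso n (k * t) (rep k t j) f) (r : Fin (k * t)) (v : ZMod n) :
    rcl ((f (r, v)).1) = tauf c f (rcl r) := by
  apply c.uniqJ (cv := uval c f * (j (rcl r) : ZMod n))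
  · exact tau_key0 c hf r v
  · have h := tau_key0 c hf (Fin.castLE c.hle (rcl r)) 0
    rwa [c.rcl_castLE] at h

/-- Key relation for `tauf`. -/
lemma tau_key (c : Ctx n t k j) {f : Equiv.Perm (Fin (k * t) × ZMod n)}
    (hf : Iso n (k * t) (rep k t j) f) (s : Fin t) :
    (j (tauf c f s) : ZMod n) = uval c f * (j s : ZMod n) ∨
    (j (tauf c f s) : ZMod n) = -(uval c f * (j s : ZMod n)) := by
  have h := tau_key0 c hf (Fin.castLE c.hle s) 0
  rw [tau_spec c hf] at h
  rwa [c.rcl_castLE] at h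

/-- Quotient map and lift. -/
def qmap {k t n : ℕ} (w : Fin (k * t) × ZMod n) : Fin t × ZMod n := (rcl w.1, w.2)

def liftV (c : Ctx n t k j) (x : Fin t × ZMod n) : Fin (k * t) × ZMod n :=
  (Fin.castLE c.hle x.1, x.2)

lemma qmap_liftV (c : Ctx n t k j) (x : Fin t × ZMod n) : qmap (liftV c x) = x := by
  unfold qmap liftV
  rw [c.rcl_castLE]

/-- The induced map on the quotient. -/
def barF (c : Ctx n t k j) (f : Equiv.Perm (Fin (k * t) × ZMod n)) (x : Fin t × ZMod n) :
    Fin t × ZMod n :=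
  (tauf c f x.1, bfun c f 0 + x.2 * uval c f)

lemma barF_comm (c : Ctx n t k j) {f : Equiv.Perm (Fin (k * t) × ZMod n)}
    (hf : Iso n (k * t) (rep k t j) f) (w : Fin (k * t) × ZMod n) :
    barF c f (qmap w) = qmap (f w) := by
  unfold barF qmap
  refine Prod.ext ?_ ?_
  · exact (tau_spec c hf w.1 w.2).symm
  · show bfun c f 0 + w.2 * uval c f = (f w).2
    have h1 : (f (w.1, w.2)).2 = bfun c f w.2 := col_eq c hf w.1 w.2
    rw [bfun_affine c hf w.2] at h1
    rw [← h1]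

lemma barF_mul (c : Ctx n t k j) {f g : Equiv.Perm (Fin (k * t) × ZMod n)}
    (hf : Iso n (k * t) (rep k t j) f) (hg : Iso n (k * t) (rep k t j) g)
    (x : Fin t × ZMod n) :
    barF c (f * g) x = barF c f (barF c g x) := by
  have hx : x = qmap (liftV c x) := (qmap_liftV c x).symm
  rw [hx, barF_comm c hg, barF_comm c hf, barF_comm c (hf.mul hg)]
  rfl

lemma barF_one (c : Ctx n t k j) (x : Fin t × ZMod n) : barF c 1 x = x := by
  have hx : x = qmap (liftV c x) := (qmap_liftV c x).symm
  rw [hx, barF_comm c (Iso.one)]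
  rfl

lemma barF_inv_comp (c : Ctx n t k j) {f : Equiv.Perm (Fin (k * t) × ZMod n)}
    (hf : Iso n (k * t) (rep k t j) f) (x : Fin t × ZMod n) :
    barF c f⁻¹ (barF c f x) = x := by
  rw [← barF_mul c hf.inv hf, inv_mul_cancel, barF_one]

/-- The induced permutation on the quotient. -/
def barE (c : Ctx n t k j) (f : Equiv.Perm (Fin (k * t) × ZMod n))
    (hf : Iso n (k * t) (rep k t j) f) : Equiv.Perm (Fin t × ZMod n) where
  toFun := barF c f
  invFun := barF c f⁻¹
  left_inv := barF_inv_comp c hf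
  right_inv := by
    intro x
    have h := barF_inv_comp c hf.inv (x := x)
    rwa [inv_inv] at h

end GIAux

namespace GIAux

variable {n t k : ℕ} {j : Fin t → ℤ}

lemma tau_inv_comp (c : Ctx n t k j) {f : Equiv.Perm (Fin (k * t) × ZMod n)}
    (hf : Iso n (k * t) (rep k t j) f) (s : Fin t) :
    tauf c f⁻¹ (tauf c f s) = s := by
  have h := barF_inv_comp c hf (x := (s, 0))
  exact congrArg Prod.fst h

lemma tau_inj (c : Ctx n t k j) {f : Equiv.Perm (Fin (k * t) × ZMod n)}
    (hf : Iso n (k * t) (rep k t j) f) {a b : Fin t}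
    (h : tauf c f a = tauf c f b) : a = b := by
  have ha := tau_inv_comp c hf a
  have hb := tau_inv_comp c hf b
  rw [← ha, ← hb, h]

lemma bar_adj_layer (c : Ctx n t k j) {f : Equiv.Perm (Fin (k * t) × ZMod n)}
    (hf : Iso n (k * t) (rep k t j) f) {x y : Fin t × ZMod n}
    (h1 : x.1 = y.1) (h2 : y.2 = x.2 + (j x.1 : ZMod n)) :
    (GI n t j).Adj (barF c f x) (barF c f y) := by
  have hfst : (barF c f x).1 = (barF c f y).1 := by
    show tauf c f x.1 = tauf c f y.1
    rw [h1]
  rcases tau_key c hf x.1 with hk | hk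
  · refine adj_layer (x := barF c f x) (y := barF c f y) ?_ hfst ?_
    · show (j (tauf c f x.1) : ZMod n) ≠ 0
      exact c.hj _
    · show bfun c f 0 + y.2 * uval c f
        = bfun c f 0 + x.2 * uval c f + (j (tauf c f x.1) : ZMod n)
      rw [hk, h2]; ring
  · refine (adj_layer (x := barF c f y) (y := barF c f x) ?_ hfst.symm ?_).symm
    · show (j (tauf c f y.1) : ZMod n) ≠ 0
      exact c.hj _
    · show bfun c f 0 + x.2 * uval c f
        = bfun c f 0 + y.2 * uval c f + (j (tauf c f y.1) : ZMod n)
      have : tauf c f y.1 = tauf c f x.1 := by rw [h1]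
      rw [this, hk, h2]; ring

lemma bar_adj (c : Ctx n t k j) {f : Equiv.Perm (Fin (k * t) × ZMod n)}
    (hf : Iso n (k * t) (rep k t j) f) {x y : Fin t × ZMod n}
    (h : (GI n t j).Adj x y) :
    (GI n t j).Adj (barF c f x) (barF c f y) := by
  rcases gi_adj.mp h with ⟨hne, (⟨e1, e2⟩ | ⟨e1, e2⟩ | ⟨e1, e2⟩)⟩
  · refine adj_spoke ?_ ?_
    · show bfun c f 0 + x.2 * uval c f = bfun c f 0 + y.2 * uval c f
      rw [e1]
    · show tauf c f x.1 ≠ tauf c f y.1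
      intro hh
      exact e2 (tau_inj c hf hh)
  · exact bar_adj_layer c hf e1 e2
  · exact (bar_adj_layer c hf e1 e2).symm

lemma uval_mul (c : Ctx n t k j) {f g : Equiv.Perm (Fin (k * t) × ZMod n)}
    (hf : Iso n (k * t) (rep k t j) f) (hg : Iso n (k * t) (rep k t j) g) :
    uval c (f * g) = uval c f * uval c g := by
  have s₀ : Fin t := ⟨0, c.tpos⟩
  have e0 := congrArg Prod.snd (barF_mul c hf hg (s₀, (0 : ZMod n)))
  have e1 := congrArg Prod.snd (barF_mul c hf hg (s₀, (1 : ZMod n)))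
  simp only [barF] at e0 e1
  linear_combination e1 - e0

lemma uval_one (c : Ctx n t k j) : uval c (1 : Equiv.Perm (Fin (k * t) × ZMod n)) = 1 := by
  simp [uval, bfun]

end GIAux

namespace GIAux

variable {n t k : ℕ} {j : Fin t → ℤ}

lemma tau_comm (c : Ctx n t k j) {f g : Equiv.Perm (Fin (k * t) × ZMod n)}
    (hf : Iso n (k * t) (rep k t j) f) (hg : Iso n (k * t) (rep k t j) g) (s : Fin t) :
    tauf c f (tauf c g s) = tauf c g (tauf c f s) := by
  have pm_mul : ∀ (a b u cv : ZMod n), (a = u * b ∨ a = -(u * b)) →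
      (b = cv ∨ b = -cv) → (a = u * cv ∨ a = -(u * cv)) := by
    intro a b u cv h1 h2
    rcases h1 with h1 | h1 <;> rcases h2 with h2 | h2 <;> rw [h1, h2]
    · left; rfl
    · right; ring
    · right; ring
    · left; ring
  apply c.uniqJ (cv := (uval c f * uval c g) * (j s : ZMod n))
  · have A := tau_key c hf (tauf c g s)
    have B := tau_key c hg s
    have := pm_mul _ _ (uval c f) (uval c g * (j s : ZMod n)) A B
    rcases this with h | h
    · left; rw [h]; ring
    · right; rw [h]; ring
  · have A := tau_key c hg (tauf c f s)
    have B := tau_key c hf s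
    have := pm_mul _ _ (uval c g) (uval c f * (j s : ZMod n)) A B
    rcases this with h | h
    · left; rw [h]; ring
    · right; rw [h]; ring

/-- The main engine: a regular group of automorphisms of `GI(n;[k]j)` with `k` odd
induces one of `GI(n;j)`. -/
lemma step (c : Ctx n t k j) (hkodd : Odd k)
    (H : Subgroup (Equiv.Perm (Fin (k * t) × ZMod n)))
    (hH : IsRegularAutGroup (GI n (k * t) (rep k t j)) H) :
    IsCayley (GI n t j) := by
  classical
  haveI : NeZero n := ⟨by have := c.hn; omega⟩
  have hiso : ∀ g : ↥H, Iso n (k * t) (rep k t j) g.1 :=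
    fun g x y => hH.1 g.1 g.2 x y
  -- the induced homomorphism
  let barHom : ↥H →* Equiv.Perm (Fin t × ZMod n) :=
    MonoidHom.mk' (fun g => barE c g.1 (hiso g))
      (by
        intro a b
        apply Equiv.ext
        intro x
        exact barF_mul c (hiso a) (hiso b) x)
  have hbar_apply : ∀ (g : ↥H) (x : Fin t × ZMod n), barHom g x = barF c g.1 x :=
    fun g x => rfl
  -- transitivity of the induced action
  have btrans : ∀ x y : Fin t × ZMod n, ∃ g : ↥H, barHom g x = y := by
    intro x y
    obtain ⟨π, ⟨hπH, hπx⟩, _⟩ := hH.2 (liftV c x) (liftV c y)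
    refine ⟨⟨π, hπH⟩, ?_⟩
    rw [hbar_apply]
    calc barF c π x = barF c π (qmap (liftV c x)) := by rw [qmap_liftV]
    _ = qmap (π (liftV c x)) := barF_comm c (hiso ⟨π, hπH⟩) _
    _ = y := by rw [hπx, qmap_liftV]
  -- cardinality of H
  have hcardH : Nat.card ↥H = k * t * n := by
    have hbij : Function.Bijective (fun g : ↥H => g.1 (⟨0, c.hpos⟩, (0 : ZMod n))) := by
      constructor
      · intro g₁ g₂ hgg
        obtain ⟨π, hπ, huniq⟩ := hH.2 (⟨0, c.hpos⟩, (0 : ZMod n)) (g₁.1 (⟨0, c.hpos⟩, (0 : ZMod n)))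
        have e1 := huniq g₁.1 ⟨g₁.2, rfl⟩
        have e2 := huniq g₂.1 ⟨g₂.2, hgg.symm⟩
        exact Subtype.ext (e1.trans e2.symm)
      · intro y
        obtain ⟨π, ⟨hπH, hπx⟩, _⟩ := hH.2 (⟨0, c.hpos⟩, (0 : ZMod n)) y
        exact ⟨⟨π, hπH⟩, hπx⟩
    have := Nat.card_congr (Equiv.ofBijective _ hbij)
    rw [this, Nat.card_prod, Nat.card_zmod, Nat.card_eq_fintype_card, Fintype.card_fin]
  -- induced action and stabilizers
  letI : MulAction ↥H (Fin t × ZMod n) := MulAction.compHom _ barHom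
  have hsmul : ∀ (g : ↥H) (x : Fin t × ZMod n), g • x = barHom g x := fun g x => rfl
  have hstabcard : ∀ x₀ : Fin t × ZMod n,
      Nat.card ↥(MulAction.stabilizer ↥H x₀) = k := by
    intro x₀
    have horb : MulAction.orbit ↥H x₀ = Set.univ := by
      apply Set.eq_univ_of_forall
      intro y
      obtain ⟨g, hg⟩ := btrans x₀ y
      exact ⟨g, by show g • x₀ = y; rw [hsmul]; exact hg⟩
    have h1 := Subgroup.card_eq_card_quotient_mul_card_subgroup
      (MulAction.stabilizer ↥H x₀)
    have h2 : Nat.card (↥H ⧸ MulAction.stabilizer ↥H x₀)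
        = Nat.card (Fin t × ZMod n) := by
      rw [← Nat.card_congr (MulAction.orbitEquivQuotientStabilizer ↥H x₀)]
      rw [horb]
      exact Nat.card_univ
    rw [h2] at h1
    have h3 : Nat.card (Fin t × ZMod n) = t * n := by
      rw [Nat.card_prod, Nat.card_zmod, Nat.card_eq_fintype_card, Fintype.card_fin]
    rw [h3, hcardH] at h1
    have htn : 0 < t * n := by
      have := c.ht; have := c.hn
      positivity
    apply Nat.eq_of_mul_eq_mul_left htn
    rw [← h1]; ring
  -- stabilizer elements fix all row classes
  have tau_fix_all : ∀ (x₀ : Fin t × ZMod n) (g : ↥H), barHom g x₀ = x₀ →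
      ∀ s, tauf c g.1 s = s := by
    intro x₀ g hfix s
    have hfst : tauf c g.1 x₀.1 = x₀.1 := by
      have := congrArg Prod.fst hfix
      rw [hbar_apply] at hfix
      exact congrArg Prod.fst hfix
    obtain ⟨h, hh⟩ := btrans (x₀.1, (0 : ZMod n)) (s, (0 : ZMod n))
    rw [hbar_apply] at hh
    have hh1 : tauf c h.1 x₀.1 = s := congrArg Prod.fst hh
    calc tauf c g.1 s = tauf c g.1 (tauf c h.1 x₀.1) := by rw [hh1]
    _ = tauf c h.1 (tauf c g.1 x₀.1) := tau_comm c (hiso g) (hiso h) x₀.1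
    _ = tauf c h.1 x₀.1 := by rw [hfst]
    _ = s := hh1
  -- stabilizer elements have multiplier ±1
  have stab_pm : ∀ (x₀ : Fin t × ZMod n) (g : ↥H), barHom g x₀ = x₀ →
      uval c g.1 = 1 ∨ uval c g.1 = -1 := by
    intro x₀ g hfix
    obtain ⟨s₁, hs₁⟩ := c.prim1
    have h1 : tauf c g.1 s₁ = s₁ := tau_fix_all x₀ g hfix s₁
    rcases tau_key c (hiso g) s₁ with hk | hk <;> rw [h1, hs₁, mul_one] at hk
    · left; exact hk.symm
    · right; linear_combination hk
  -- power rule for the multiplier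
  have u_pow : ∀ (g : ↥H) (m : ℕ), uval c ((g ^ m : ↥H) : Equiv.Perm _) =
      (uval c g.1) ^ m := by
    intro g m
    induction m with
    | zero => simpa using uval_one c
    | succ m ih =>
      have hco : ((g ^ (m + 1) : ↥H) : Equiv.Perm _)
          = ((g ^ m : ↥H) : Equiv.Perm _) * g.1 := by
        push_cast [pow_succ]
        rfl
      rw [hco, uval_mul c (hiso (g ^ m)) (hiso g), ih, pow_succ]
  -- trivial stabilizers
  have stab_trivial : ∀ (x₀ : Fin t × ZMod n) (g : ↥H), barHom g x₀ = x₀ →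
      barHom g = 1 := by
    intro x₀ g hfix
    rcases stab_pm x₀ g hfix with hu | hu
    · -- multiplier 1: the induced map is the identity
      apply Equiv.ext
      intro z
      rw [hbar_apply]
      have hsnd : bfun c g.1 0 + x₀.2 * uval c g.1 = x₀.2 := by
        rw [hbar_apply] at hfix
        exact congrArg Prod.snd hfix
      rw [hu, mul_one] at hsnd
      have hb0 : bfun c g.1 0 = 0 := by linear_combination hsnd
      show (tauf c g.1 z.1, bfun c g.1 0 + z.2 * uval c g.1) = z
      rw [tau_fix_all x₀ g hfix z.1, hu, hb0]
      simp
    · -- multiplier -1: contradiction with odd k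
      exfalso
      have hgS : g ∈ MulAction.stabilizer ↥H x₀ := by
        rw [MulAction.mem_stabilizer_iff, hsmul, hfix]
      let gS : ↥(MulAction.stabilizer ↥H x₀) := ⟨g, hgS⟩
      have hd1 : orderOf gS ∣ Nat.card ↥(MulAction.stabilizer ↥H x₀) :=
        orderOf_dvd_natCard gS
      rw [hstabcard x₀] at hd1
      have hdodd : Odd (orderOf gS) := by
        rcases Nat.even_or_odd (orderOf gS) with he | ho
        · exfalso
          have h2d : (2 : ℕ) ∣ orderOf gS := he.two_dvd
          have h2k : (2 : ℕ) ∣ k := h2d.trans hd1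
          rcases hkodd with ⟨l, hl⟩
          omega
        · exact ho
      have hpow : gS ^ (orderOf gS) = 1 := pow_orderOf_eq_one gS
      have hpowH : (g ^ (orderOf gS) : ↥H) = 1 := by
        have := congrArg (Subtype.val) hpow
        push_cast at this
        exact this
      have h2 := u_pow g (orderOf gS)
      rw [hpowH] at h2
      have h3 : ((1 : ↥H) : Equiv.Perm (Fin (k * t) × ZMod n)) = 1 := rfl
      rw [h3, uval_one c, hu, Odd.neg_one_pow hdodd] at h2
      exact c.neg_one_ne_one h2.symm
  -- assemble the Cayley structure
  refine ⟨barHom.range, ?_, ?_⟩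
  · intro π hπ x y
    obtain ⟨g, rfl⟩ := MonoidHom.mem_range.mp hπ
    constructor
    · intro h
      rw [hbar_apply, hbar_apply]
      exact bar_adj c (hiso g) h
    · intro h
      rw [hbar_apply, hbar_apply] at h
      have h2 := bar_adj c (hiso g⁻¹) h
      have hco : (g⁻¹ : ↥H).1 = (g.1)⁻¹ := rfl
      rw [hco] at h2
      rw [barF_inv_comp c (hiso g), barF_inv_comp c (hiso g)] at h2
      exact h2
  · intro x y
    obtain ⟨g, hg⟩ := btrans x y
    refine ⟨barHom g, ⟨⟨g, rfl⟩, hg⟩, ?_⟩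
    rintro π' ⟨hmem, hπ'x⟩
    obtain ⟨g', rfl⟩ := MonoidHom.mem_range.mp hmem
    have hfix : barHom (g⁻¹ * g') x = x := by
      rw [map_mul, map_inv]
      show ((barHom g)⁻¹ : Equiv.Perm _) ((barHom g') x) = x
      rw [hπ'x, ← hg]
      exact Equiv.symm_apply_apply _ _
    have := stab_trivial x (g⁻¹ * g') hfix
    rw [map_mul, map_inv] at this
    exact (inv_mul_eq_one.mp this).symm

end GIAux

namespace GIAux

/-- Translation permutation for the cycle case. -/
def tperm (n : ℕ) (c : ZMod n) : Equiv.Perm (Fin 1 × ZMod n) :=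
  Equiv.prodCongr (Equiv.refl (Fin 1)) (Equiv.addRight c)

lemma tperm_apply (n : ℕ) (c : ZMod n) (x : Fin 1 × ZMod n) :
    tperm n c x = (x.1, x.2 + c) := rfl

lemma tperm_add (n : ℕ) (a b : ZMod n) :
    tperm n (a + b) = tperm n a * tperm n b := by
  apply Equiv.ext
  intro x
  show (x.1, x.2 + (a + b)) = ((tperm n b x).1, (tperm n b x).2 + a)
  rw [tperm_apply]
  refine Prod.ext rfl ?_
  show x.2 + (a + b) = x.2 + b + a
  ring

lemma tperm_shift {n : ℕ} (j : Fin 1 → ℤ) (c : ZMod n) {x y : Fin 1 × ZMod n}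
    (h : (GI n 1 j).Adj x y) :
    (GI n 1 j).Adj (tperm n c x) (tperm n c y) := by
  rcases gi_adj.mp h with ⟨hne, (⟨e1, e2⟩ | ⟨e1, e2⟩ | ⟨e1, e2⟩)⟩
  · exact absurd (Subsingleton.elim x.1 y.1) e2
  · refine gi_adj.mpr ⟨?_, Or.inr (Or.inl ⟨e1, ?_⟩)⟩
    · intro hc
      exact hne ((tperm n c).injective hc)
    · show (tperm n c y).2 = (tperm n c x).2 + (j (tperm n c x).1 : ZMod n)
      rw [tperm_apply, tperm_apply]
      show y.2 + c = x.2 + c + (j x.1 : ZMod n)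
      rw [e2]; ring
  · refine gi_adj.mpr ⟨?_, Or.inr (Or.inr ⟨e1, ?_⟩)⟩
    · intro hc
      exact hne ((tperm n c).injective hc)
    · show (tperm n c x).2 = (tperm n c y).2 + (j (tperm n c y).1 : ZMod n)
      rw [tperm_apply, tperm_apply]
      show x.2 + c = y.2 + c + (j y.1 : ZMod n)
      rw [e2]; ring

lemma tperm_neg_comp (n : ℕ) (c : ZMod n) (x : Fin 1 × ZMod n) :
    tperm n (-c) (tperm n c x) = x := by
  rw [tperm_apply, tperm_apply]
  show (x.1, x.2 + c + -c) = x
  rw [add_neg_cancel_right]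

/-- `GI(n;j)` with `t = 1` is a cycle, hence Cayley. -/
lemma cayley_t_one (n : ℕ) (j : Fin 1 → ℤ) : IsCayley (GI n 1 j) := by
  classical
  let θ : Multiplicative (ZMod n) →* Equiv.Perm (Fin 1 × ZMod n) :=
    MonoidHom.mk' (fun a => tperm n a.toAdd)
      (by
        intro a b
        exact tperm_add n a.toAdd b.toAdd)
  refine ⟨θ.range, ?_, ?_⟩
  · intro π hπ x y
    obtain ⟨a, rfl⟩ := MonoidHom.mem_range.mp hπ
    constructor
    · exact tperm_shift j a.toAdd
    · intro h
      have h2 := tperm_shift j (-a.toAdd) h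
      show (GI n 1 j).Adj x y
      rwa [show (θ a : Equiv.Perm (Fin 1 × ZMod n)) = tperm n a.toAdd from rfl,
        tperm_neg_comp, tperm_neg_comp] at h2
  · intro x y
    refine ⟨θ (Multiplicative.ofAdd (y.2 - x.2)), ⟨⟨_, rfl⟩, ?_⟩, ?_⟩
    · show tperm n (y.2 - x.2) x = y
      rw [tperm_apply]
      refine Prod.ext (Subsingleton.elim _ _) ?_
      show x.2 + (y.2 - x.2) = y.2
      ring
    · rintro π' ⟨hmem, hπ'x⟩
      obtain ⟨a, rfl⟩ := MonoidHom.mem_range.mp hmem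
      have ha : a.toAdd = y.2 - x.2 := by
        have : tperm n a.toAdd x = y := hπ'x
        rw [tperm_apply] at this
        have h2 : x.2 + a.toAdd = y.2 := congrArg Prod.snd this
        linear_combination h2
      exact congrArg θ ha

end GIAux

/-- if `j` is primitive and `GI(n;j)` is vertex-transitive but not a
Cayley graph, then `GI(n;[k]j)` is not a Cayley graph for any odd `k > 1`. -/
theorem GI_odd_rep_not_cayley (n t : ℕ) (hn : 3 ≤ n) (ht : 1 ≤ t) (j : Fin t → ℤ)
    (hj : ∀ s, (j s : ZMod n) ≠ 0 ∧ ((2 * j s : ℤ) : ZMod n) ≠ 0)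
    (hprim : PrimitiveSeq n j)
    (hvt : IsVertexTransitive (GI n t j))
    (hnc : ¬ IsCayley (GI n t j)) :
    ∀ k : ℕ, 1 < k → Odd k → ¬ IsCayley (GI n (k * t) (rep k t j)) := by
  intro k hk1 hkodd hcay
  rcases Nat.lt_or_ge t 2 with ht2 | ht2
  · have ht1 : t = 1 := by omega
    subst ht1
    exact hnc (GIAux.cayley_t_one n j)
  · obtain ⟨H, hH⟩ := hcay
    have hk3 : 3 ≤ k := by
      rcases hkodd with ⟨l, hl⟩
      omega
    have c : GIAux.Ctx n t k j :=
      ⟨hn, ht2, hk3, fun s => (hj s).1, hprim.1, hprim.2⟩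
    exact hnc (GIAux.step c hkodd H hH)
end
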